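/- arXiv:2403.10189 — 6 statements merged into one kernel-verified Lean document; each statement's English description precedes it below -/
import Mathlib

section
/- For all nonnegative integers r, s, n and i ∈ {1,2}, H_i(r,s,n) = G_i(r,s,n), where H_i(r,s,n) counts partitions of n with exactly r even parts and s odd parts, with distinct odd parts, smallest even part ≥ 2(r+s+i−1), and smallest odd part ≥ 2i−1; and G_i(r,s,n) counts partitions of n with exactly r even parts and s odd parts, all parts ≥ 2i−1, with no two parts equal or consecutive and no two even parts equal or consecutive. -/
/-- Odd parts are pairwise distinct. -/
def distinctOddParts (m : Multiset ℕ) : Prop := ∀ a, Odd a → m.count a ≤ 1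

/-- Every even part is at least `k` (vacuous if no even part). -/
def minEvenGe (m : Multiset ℕ) (k : ℕ) : Prop := ∀ a ∈ m, Even a → k ≤ a

/-- Every odd part is at least `k` (vacuous if no odd part). -/
def minOddGe (m : Multiset ℕ) (k : ℕ) : Prop := ∀ a ∈ m, Odd a → k ≤ a

/-- No two parts are equal or consecutive, and no two even parts are equal or
consecutive even numbers: parts pairwise differ by at least 2, even parts by at least 4. -/
def gapCond (m : Multiset ℕ) : Prop :=
  (∀ a, m.count a ≤ 1) ∧ (∀ a ∈ m, ∀ b ∈ m, a < b → a + 2 ≤ b) ∧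
  (∀ a ∈ m, ∀ b ∈ m, Even a → Even b → a < b → a + 4 ≤ b)

/-- Number of even parts. -/
def evenCount (m : Multiset ℕ) : ℕ := (m.filter (fun a => Even a)).card

/-- Number of odd parts. -/
def oddCount (m : Multiset ℕ) : ℕ := (m.filter (fun a => Odd a)).card

noncomputable def Hcount (i r s n : ℕ) : ℕ :=
  {p : n.Partition | evenCount p.parts = r ∧ oddCount p.parts = s ∧
    distinctOddParts p.parts ∧ minEvenGe p.parts (2 * (r + s + i - 1)) ∧
    minOddGe p.parts (2 * i - 1)}.ncard

noncomputable def Gcount (i r s n : ℕ) : ℕ :=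
  {p : n.Partition | evenCount p.parts = r ∧ oddCount p.parts = s ∧
    (∀ a ∈ p.parts, 2 * i - 1 ≤ a) ∧ gapCond p.parts}.ncard

/-!
For `i = 1` both counts satisfy the same recursion. In an `H`-partition look at whether `1` is a
part, and if not, whether the least admissible even part `2(r+s)` is a part; in a `G`-partition
look at whether `1`, and if not whether `2`, is a part. Removing that part and subtracting `2`
from every other part (`4` when `2` is removed from a `G`-partition), or subtracting `2` from
every part when neither occurs, is a bijection onto the partitions with parameters `(r, s-1)`,
`(r-1, s)`, `(r, s)` respectively, of the same smaller number on both sides; induction on `n`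
concludes. For `i = 2`, subtracting `2` from every part reduces to `i = 1`.
-/

open Multiset

section Counts

variable {M : Multiset ℕ} {a d : ℕ}

theorem evenCount_cons :
    evenCount (a ::ₘ M) = evenCount M + if Even a then 1 else 0 := by
  by_cases h : Even a <;> simp [evenCount, h]

theorem oddCount_cons :
    oddCount (a ::ₘ M) = oddCount M + if Odd a then 1 else 0 := by
  by_cases h : Odd a <;> simp [oddCount, h]

theorem evenCount_map_add (hd : Even d) :
    evenCount (M.map (· + d)) = evenCount M := by
  simp [evenCount, filter_map, Nat.even_add, hd]

theorem oddCount_map_add (hd : Even d) :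
    oddCount (M.map (· + d)) = oddCount M := by
  simp [oddCount, filter_map, Nat.odd_add, hd]

theorem card_eq_evenCount_add_oddCount (M : Multiset ℕ) :
    card M = evenCount M + oddCount M := by
  simp only [evenCount, oddCount, ← Nat.not_even_iff_odd]
  rw [← card_add, filter_add_not]

theorem evenCount_pos (ha : a ∈ M) (h : Even a) : 0 < evenCount M :=
  card_pos_iff_exists_mem.2 ⟨a, mem_filter.2 ⟨ha, h⟩⟩

theorem oddCount_pos (ha : a ∈ M) (h : Odd a) : 0 < oddCount M :=
  card_pos_iff_exists_mem.2 ⟨a, mem_filter.2 ⟨ha, h⟩⟩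

end Counts

section Conditions

variable {M : Multiset ℕ} {a d k : ℕ}

theorem distinctOddParts_cons :
    distinctOddParts (a ::ₘ M) ↔ (Odd a → a ∉ M) ∧ distinctOddParts M := by
  simp only [distinctOddParts, count_cons]
  constructor
  · intro h
    refine ⟨fun ha hm => ?_, fun b hb => ?_⟩
    · have := h a ha
      simp only [if_true] at this
      have := count_pos.2 hm
      omega
    · have := h b hb
      omega
  · rintro ⟨ha, hM⟩ b hb
    split_ifs with hab
    · subst hab
      simp [count_eq_zero.2 (ha hb)]
    · simpa using hM b hb

theorem distinctOddParts.notMem_erase (h : distinctOddParts M) (ha : Odd a) :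
    a ∉ M.erase a := by
  rw [← count_eq_zero, count_erase_self]
  have := h a ha
  omega

theorem distinctOddParts_map_add (hd : Even d) :
    distinctOddParts (M.map (· + d)) ↔ distinctOddParts M := by
  simp only [distinctOddParts]
  constructor
  · intro h a ha
    simpa [count_map_eq_count' _ _ (add_left_injective d)] using
      h (a + d) (by simp [Nat.odd_add, ha, hd])
  · intro h a ha
    by_cases had : d ≤ a
    · obtain ⟨b, rfl⟩ := Nat.exists_eq_add_of_le' had
      rw [count_map_eq_count' _ _ (add_left_injective d)]
      exact h b (by simpa [Nat.odd_add, hd] using ha)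
    · rw [count_eq_zero.2]
      · omega
      · simp only [mem_map, not_exists, not_and]
        omega

theorem minEvenGe_cons :
    minEvenGe (a ::ₘ M) k ↔ (Even a → k ≤ a) ∧ minEvenGe M k := by
  simp [minEvenGe]

theorem minEvenGe_map_add (hd : Even d) :
    minEvenGe (M.map (· + d)) (k + d) ↔ minEvenGe M k := by
  simp [minEvenGe, Nat.even_add, hd]

theorem minOddGe_cons :
    minOddGe (a ::ₘ M) k ↔ (Odd a → k ≤ a) ∧ minOddGe M k := by
  simp [minOddGe]

theorem minOddGe_map_add (hd : Even d) :
    minOddGe (M.map (· + d)) (k + d) ↔ minOddGe M k := by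
  simp [minOddGe, Nat.odd_add, hd]

@[simp]
theorem minOddGe_one : minOddGe M 1 := fun _ _ ha => ha.pos

end Conditions

section Gap

variable {M : Multiset ℕ}

theorem gapCond.nodup (h : gapCond M) : M.Nodup :=
  nodup_iff_count_le_one.2 h.1

theorem gapCond_map_add {d : ℕ} (hd : Even d) : gapCond (M.map (· + d)) ↔ gapCond M := by
  simp only [gapCond, ← nodup_iff_count_le_one, nodup_map_iff_of_injective (add_left_injective d),
    forall_mem_map_iff, Nat.even_add, hd, iff_true]
  refine and_congr_right fun _ => and_congr ?_ ?_ <;>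
    refine forall₂_congr fun a _ => forall₂_congr fun b _ => ?_
  · constructor <;> intro h hab <;> have := h (by omega) <;> omega
  · constructor <;> intro h ha hb hab <;> have := h ha hb (by omega) <;> omega

theorem gapCond_cons {c : ℕ} (h : ∀ b ∈ M, c + 2 ≤ b ∧ (Even c → Even b → c + 4 ≤ b)) :
    gapCond (c ::ₘ M) ↔ gapCond M := by
  simp only [gapCond, ← nodup_iff_count_le_one, nodup_cons, mem_cons, forall_eq_or_imp]
  have hc : c ∉ M := fun hm => by have := (h c hm).1; omega
  constructor
  · rintro ⟨⟨-, hM⟩, ⟨-, h2⟩, -, h3⟩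
    exact ⟨hM, fun a ha => (h2 a ha).2, fun a ha => (h3 a ha).2⟩
  · rintro ⟨hM, h2, h3⟩
    refine ⟨⟨hc, hM⟩, ⟨⟨by omega, fun b hb _ => (h b hb).1⟩, fun a ha => ⟨fun hac => ?_, h2 a ha⟩⟩,
      ⟨⟨fun _ _ => by omega, fun b hb hce hbe _ => (h b hb).2 hce hbe⟩,
        fun a ha => ⟨fun _ _ hac => ?_, h3 a ha⟩⟩⟩ <;>
    · have := (h a ha).1; omega

end Gap

theorem sum_add_map_add_const (e M : Multiset ℕ) (d : ℕ) :
    (e + M.map (· + d)).sum = e.sum + M.sum + d * card M := by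
  simp [sum_map_add, add_assoc, mul_comm]

theorem exists_pos_eq_add_map_add {N e : Multiset ℕ} {d : ℕ} (hle : e ≤ N)
    (hgt : ∀ b ∈ N - e, d < b) : ∃ M : Multiset ℕ, (∀ a ∈ M, 0 < a) ∧ N = e + M.map (· + d) := by
  refine ⟨(N - e).map (· - d), ?_, ?_⟩
  · simp only [mem_map, forall_exists_index, and_imp, forall_apply_eq_imp_iff₂]
    intro b hb
    have := hgt b hb
    omega
  · rw [map_map]
    refine (add_tsub_cancel_of_le hle).symm.trans (congrArg (e + ·) ?_)
    exact (map_id' _).symm.trans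
      (map_congr rfl fun b hb => (Nat.sub_add_cancel (hgt b hb).le).symm)

section PartCount

noncomputable def partCount (P : Multiset ℕ → Prop) (n : ℕ) : ℕ :=
  {p : n.Partition | P p.parts}.ncard

variable {P Q : Multiset ℕ → Prop} {n : ℕ}

theorem partCount_congr (h : ∀ M, (∀ a ∈ M, 0 < a) → (P M ↔ Q M)) :
    partCount P n = partCount Q n := by
  unfold partCount
  congr 1
  ext p
  exact h p.parts fun _ => p.parts_pos

theorem partCount_eq_zero (h : ∀ M, ¬P M) : partCount P n = 0 := by
  simp [partCount, h]

theorem partCount_split (A : Multiset ℕ → Prop) :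
    partCount P n = partCount (fun M => P M ∧ A M) n + partCount (fun M => P M ∧ ¬A M) n :=
  (Set.ncard_inter_add_ncard_sdiff_eq_ncard {p : n.Partition | P p.parts} {p | A p.parts}).symm

theorem partCount_split_three (a c : ℕ) :
    partCount P n = partCount (fun M => P M ∧ a ∈ M) n + partCount (fun M => P M ∧ a ∉ M ∧ c ∈ M) n
      + partCount (fun M => P M ∧ a ∉ M ∧ c ∉ M) n := by
  rw [partCount_split (a ∈ ·), partCount_split (P := fun M => P M ∧ a ∉ M) (c ∈ ·), add_assoc]
  simp only [and_assoc]

/-- `M ↦ e + (M shifted up by d)` matches the `P`-partitions of `n - c` with the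
`Q`-partitions of `n`. -/
theorem partCount_shift {d k c : ℕ} {e : Multiset ℕ} (he : ∀ a ∈ e, 0 < a)
    (hc : d * k + e.sum = c) (hP : ∀ M, P M → card M = k)
    (hPQ : ∀ M, (∀ a ∈ M, 0 < a) → (Q (e + M.map (· + d)) ↔ P M))
    (hQ : ∀ N, Q N → e ≤ N ∧ ∀ b ∈ N - e, d < b) (n : ℕ) :
    partCount Q n = if c ≤ n then partCount P (n - c) else 0 := by
  have hdecomp : ∀ N, Q N → ∃ M, (∀ a ∈ M, 0 < a) ∧ P M ∧ N = e + M.map (· + d) := by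
    intro N hN
    obtain ⟨M, hM, rfl⟩ := exists_pos_eq_add_map_add (hQ N hN).1 (hQ N hN).2
    exact ⟨M, hM, (hPQ M hM).1 hN, rfl⟩
  have hpos : ∀ M : Multiset ℕ, (∀ a ∈ M, 0 < a) → ∀ a ∈ e + M.map (· + d), 0 < a := by
    intro M hM a ha
    rcases mem_add.1 ha with ha | ha
    · exact he a ha
    · obtain ⟨b, hb, rfl⟩ := mem_map.1 ha
      have := hM b hb
      omega
  split_ifs with hcn
  · obtain ⟨m, rfl⟩ := Nat.exists_eq_add_of_le' hcn
    rw [Nat.add_sub_cancel]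
    symm
    refine Set.ncard_congr
      (fun p hp => ⟨e + p.parts.map (· + d), hpos _ (fun _ => p.parts_pos) _, ?_⟩) ?_ ?_ ?_
    · rw [sum_add_map_add_const, p.parts_sum, hP _ hp, ← hc]
      ring
    · intro p hp
      exact (hPQ _ fun _ => p.parts_pos).2 hp
    · intro p q _ _ hpq
      exact Nat.Partition.ext <| map_injective (add_left_injective d) <|
        add_left_cancel (congrArg Nat.Partition.parts hpq)
    · intro q hq
      obtain ⟨M, hM, hPM, hqM⟩ := hdecomp q.parts hq
      have hsum := q.parts_sum
      rw [hqM, sum_add_map_add_const, hP M hPM, ← hc] at hsum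
      exact ⟨⟨M, hM _, by omega⟩, hPM, Nat.Partition.ext hqM.symm⟩
  · refine (Set.ncard_eq_zero).2 (Set.eq_empty_of_forall_notMem fun q hq => hcn ?_)
    obtain ⟨M, -, hPM, hq'⟩ := hdecomp q.parts hq
    have hsum := q.parts_sum
    rw [hq', sum_add_map_add_const, hP M hPM] at hsum
    omega

end PartCount

section HSide

/-- `Hcount i r s n = partCount (hCond r s (2 * (r + s + i - 1)) (2 * i - 1)) n` and
`Gcount i r s n = partCount (gCond r s (2 * i - 1)) n` hold by definition. -/
def hCond (r s e o : ℕ) (M : Multiset ℕ) : Prop :=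
  evenCount M = r ∧ oddCount M = s ∧ distinctOddParts M ∧ minEvenGe M e ∧ minOddGe M o

variable {r s e o : ℕ} {M : Multiset ℕ}

theorem hCond.card_eq (h : hCond r s e o M) : card M = r + s := by
  rw [card_eq_evenCount_add_oddCount, h.1, h.2.1]

theorem hCond_map_add {d : ℕ} (hd : Even d) :
    hCond r s (e + d) (o + d) (M.map (· + d)) ↔ hCond r s e o M := by
  simp only [hCond, evenCount_map_add hd, oddCount_map_add hd, distinctOddParts_map_add hd,
    minEvenGe_map_add hd, minOddGe_map_add hd]

theorem partCount_hCond_shift (n : ℕ) :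
    partCount (hCond r s (2 * (r + s) + 2) 3) n =
      if 2 * (r + s) ≤ n then partCount (hCond r s (2 * (r + s)) 1) (n - 2 * (r + s)) else 0 := by
  refine partCount_shift (d := 2) (e := 0) (by simp) (by simp) (fun _ => hCond.card_eq)
    (fun M _ => by rw [zero_add]; exact hCond_map_add even_two) (fun N hN => ⟨zero_le _, ?_⟩) n
  intro b hb
  rw [tsub_zero] at hb
  obtain ⟨hr, -, -, heven, hodd⟩ := hN
  rcases Nat.even_or_odd b with hbe | hbo
  · have := evenCount_pos hb hbe
    have := heven b hb hbe
    omega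
  · have := hodd b hb hbo
    omega

theorem partCount_hCond_one_mem (n : ℕ) :
    partCount (fun N => hCond r (s + 1) (2 * (r + (s + 1))) 1 N ∧ 1 ∈ N) n =
      if 2 * (r + s) + 1 ≤ n then partCount (hCond r s (2 * (r + s)) 1) (n - (2 * (r + s) + 1))
      else 0 := by
  refine partCount_shift (d := 2) (e := {1}) (by simp) (by simp) (fun _ => hCond.card_eq)
    (fun M hM => ?_) (fun N hN => ?_) n
  · have : 2 * (r + (s + 1)) = 2 * (r + s) + 2 := by ring
    rw [singleton_add, this]
    simp [hCond, evenCount_cons, oddCount_cons, distinctOddParts_cons, minEvenGe_cons,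
      evenCount_map_add even_two, oddCount_map_add even_two, distinctOddParts_map_add even_two,
      minEvenGe_map_add even_two]
  · obtain ⟨⟨hr, -, hdist, heven, -⟩, h1⟩ := hN
    refine ⟨singleton_le.2 h1, fun b hb => ?_⟩
    rw [sub_singleton] at hb
    have hbN := mem_of_mem_erase hb
    rcases Nat.even_or_odd b with hbe | hbo
    · have := evenCount_pos hbN hbe
      have := heven b hbN hbe
      omega
    · have : b ≠ 1 := by rintro rfl; exact hdist.notMem_erase odd_one hb
      have := Nat.odd_iff.1 hbo
      omega

theorem partCount_hCond_two_mul_mem (n : ℕ) :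
    partCount (fun N => hCond (r + 1) s (2 * (r + 1 + s)) 1 N ∧ 1 ∉ N ∧ 2 * (r + 1 + s) ∈ N) n =
      if 4 * (r + s) + 2 ≤ n then partCount (hCond r s (2 * (r + s)) 1) (n - (4 * (r + s) + 2))
      else 0 := by
  refine partCount_shift (d := 2) (e := {2 * (r + 1 + s)}) (by simp) (by simp; ring)
    (fun _ => hCond.card_eq) (fun M hM => ?_) (fun N hN => ?_) n
  · have hK : 2 * (r + 1 + s) = 2 * (r + s) + 2 := by ring
    have hKeven : Even (2 * (r + s) + 2) := hK ▸ even_two_mul _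
    rw [singleton_add, hK]
    simp [hCond, evenCount_cons, oddCount_cons, distinctOddParts_cons, minEvenGe_cons,
      evenCount_map_add even_two, oddCount_map_add even_two, distinctOddParts_map_add even_two,
      minEvenGe_map_add even_two, hKeven, Nat.not_odd_iff_even.2 hKeven]
  · obtain ⟨⟨hr, -, -, heven, -⟩, h1, hK⟩ := hN
    refine ⟨singleton_le.2 hK, fun b hb => ?_⟩
    rw [sub_singleton] at hb
    have hbN := mem_of_mem_erase hb
    rcases Nat.even_or_odd b with hbe | hbo
    · have := evenCount_pos hb hbe
      have := heven b hbN hbe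
      rw [← cons_erase hK, evenCount_cons, if_pos (even_two_mul _)] at hr
      omega
    · have : b ≠ 1 := by rintro rfl; exact h1 hbN
      have := Nat.odd_iff.1 hbo
      omega

theorem partCount_hCond_notMem (n : ℕ) :
    partCount (fun N => hCond r s (2 * (r + s)) 1 N ∧ 1 ∉ N ∧ 2 * (r + s) ∉ N) n =
      partCount (hCond r s (2 * (r + s) + 2) 3) n := by
  refine partCount_congr fun M _ => ⟨?_, ?_⟩
  · rintro ⟨⟨hr, hs, hd, heven, -⟩, h1, hK⟩
    refine ⟨hr, hs, hd, fun a ha hae => ?_, fun a ha hao => ?_⟩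
    · have := heven a ha hae
      have := ne_of_mem_of_not_mem ha hK
      have := Nat.even_iff.1 hae
      omega
    · have := ne_of_mem_of_not_mem ha h1
      have := Nat.odd_iff.1 hao
      omega
  · rintro ⟨hr, hs, hd, heven, hodd⟩
    refine ⟨⟨hr, hs, hd, fun a ha hae => ?_, minOddGe_one⟩, fun h1 => ?_, fun hK => ?_⟩
    · have := heven a ha hae
      omega
    · have := hodd 1 h1 odd_one
      omega
    · have := heven _ hK (even_two_mul _)
      omega

end HSide

section GSide

def gCond (r s b : ℕ) (M : Multiset ℕ) : Prop :=
  evenCount M = r ∧ oddCount M = s ∧ (∀ a ∈ M, b ≤ a) ∧ gapCond M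

variable {r s b : ℕ} {M : Multiset ℕ}

theorem gCond.card_eq (h : gCond r s b M) : card M = r + s := by
  rw [card_eq_evenCount_add_oddCount, h.1, h.2.1]

theorem gCond_map_add {d : ℕ} (hd : Even d) :
    gCond r s (b + d) (M.map (· + d)) ↔ gCond r s b M := by
  simp [gCond, evenCount_map_add hd, oddCount_map_add hd, gapCond_map_add hd]

theorem partCount_gCond_shift (n : ℕ) :
    partCount (gCond r s 3) n =
      if 2 * (r + s) ≤ n then partCount (gCond r s 1) (n - 2 * (r + s)) else 0 := by
  refine partCount_shift (d := 2) (e := 0) (by simp) (by simp) (fun _ => gCond.card_eq)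
    (fun M _ => by rw [zero_add]; exact gCond_map_add even_two)
    (fun N hN => ⟨zero_le _, fun b hb => ?_⟩) n
  rw [tsub_zero] at hb
  exact hN.2.2.1 b hb

theorem partCount_gCond_one_mem (n : ℕ) :
    partCount (fun N => gCond r (s + 1) 1 N ∧ 1 ∈ N) n =
      if 2 * (r + s) + 1 ≤ n then partCount (gCond r s 1) (n - (2 * (r + s) + 1)) else 0 := by
  refine partCount_shift (d := 2) (e := {1}) (by simp) (by simp) (fun _ => gCond.card_eq)
    (fun M hM => ?_) (fun N hN => ?_) n
  · have hM' : ∀ a ∈ M, 1 ≤ a := hM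
    have hsep : ∀ b ∈ M.map (· + 2), 1 + 2 ≤ b ∧ (Even 1 → Even b → 1 + 4 ≤ b) := by
      simpa using hM'
    rw [singleton_add]
    simp [gCond, gapCond_cons hsep, evenCount_cons, oddCount_cons, evenCount_map_add even_two,
      oddCount_map_add even_two, gapCond_map_add even_two]
    exact fun _ _ _ => hM'
  · obtain ⟨⟨-, -, hpos, hgap⟩, h1⟩ := hN
    refine ⟨singleton_le.2 h1, fun b hb => ?_⟩
    rw [sub_singleton, hgap.nodup.mem_erase_iff] at hb
    have := hpos b hb.2
    have := hgap.2.1 1 h1 b hb.2 (by omega)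
    omega

theorem partCount_gCond_two_mem (n : ℕ) :
    partCount (fun N => gCond (r + 1) s 1 N ∧ 1 ∉ N ∧ 2 ∈ N) n =
      if 4 * (r + s) + 2 ≤ n then partCount (gCond r s 1) (n - (4 * (r + s) + 2)) else 0 := by
  refine partCount_shift (d := 4) (e := {2}) (by simp) (by simp) (fun _ => gCond.card_eq)
    (fun M hM => ?_) (fun N hN => ?_) n
  · have hsep : ∀ b ∈ M.map (· + 4), 2 + 2 ≤ b ∧ (Even 2 → Even b → 2 + 4 ≤ b) := by
      simp only [mem_map, forall_exists_index, and_imp, forall_apply_eq_imp_iff₂]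
      intro a ha
      have := hM a ha
      refine ⟨by omega, fun _ hae => ?_⟩
      have := Nat.even_iff.1 hae
      omega
    have h4 : Even 4 := ⟨2, rfl⟩
    rw [singleton_add]
    simp [gCond, gapCond_cons hsep, evenCount_cons, oddCount_cons, evenCount_map_add h4,
      oddCount_map_add h4, gapCond_map_add h4, Nat.not_odd_iff_even.2 even_two]
    exact fun _ _ _ => hM
  · obtain ⟨⟨-, -, hpos, hgap⟩, h1, h2⟩ := hN
    refine ⟨singleton_le.2 h2, fun b hb => ?_⟩
    rw [sub_singleton, hgap.nodup.mem_erase_iff] at hb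
    have := hpos b hb.2
    have := ne_of_mem_of_not_mem hb.2 h1
    have := hgap.2.1 2 h2 b hb.2 (by omega)
    rcases Nat.even_or_odd b with hbe | hbo
    · have := hgap.2.2 2 h2 b hb.2 even_two hbe (by omega)
      omega
    · have := Nat.odd_iff.1 hbo
      omega

theorem partCount_gCond_notMem (n : ℕ) :
    partCount (fun N => gCond r s 1 N ∧ 1 ∉ N ∧ 2 ∉ N) n = partCount (gCond r s 3) n := by
  refine partCount_congr fun M hM => ⟨?_, ?_⟩
  · rintro ⟨⟨hr, hs, -, hgap⟩, h1, h2⟩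
    refine ⟨hr, hs, fun a ha => ?_, hgap⟩
    have := hM a ha
    have := ne_of_mem_of_not_mem ha h1
    have := ne_of_mem_of_not_mem ha h2
    omega
  · rintro ⟨hr, hs, h3, hgap⟩
    refine ⟨⟨hr, hs, fun a ha => (h3 a ha).trans' (by norm_num), hgap⟩, fun h1 => ?_, fun h2 => ?_⟩
    · have := h3 1 h1
      omega
    · have := h3 2 h2
      omega

end GSide

theorem partCount_hCond_eq_partCount_gCond (n r s : ℕ) :
    partCount (hCond r s (2 * (r + s)) 1) n = partCount (gCond r s 1) n := by
  induction n using Nat.strong_induction_on generalizing r s with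
  | _ n ih =>
  have ih_shift : ∀ r' s' c, 0 < c →
      (if c ≤ n then partCount (hCond r' s' (2 * (r' + s')) 1) (n - c) else 0) =
        if c ≤ n then partCount (gCond r' s' 1) (n - c) else 0 := by
    intro r' s' c hc
    split_ifs
    exacts [ih _ (by omega) r' s', rfl]
  rcases Nat.eq_zero_or_pos (r + s) with h0 | hpos
  · obtain ⟨rfl, rfl⟩ : r = 0 ∧ s = 0 := by omega
    refine partCount_congr fun M _ => ⟨fun h => ?_, fun h => ?_⟩ <;>
    · obtain rfl : M = 0 := card_eq_zero.1 h.card_eq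
      simp [hCond, gCond, evenCount, oddCount, distinctOddParts, minEvenGe, gapCond]
  rw [partCount_split_three (P := hCond r s _ 1) 1 (2 * (r + s)),
    partCount_split_three (P := gCond r s 1) 1 2, partCount_hCond_notMem,
    partCount_gCond_notMem, partCount_hCond_shift, partCount_gCond_shift, ih_shift _ _ _ (by omega)]
  congr 2
  · rcases s with _ | s
    · rw [partCount_eq_zero fun _ h => (oddCount_pos h.2 odd_one).ne' h.1.2.1,
        partCount_eq_zero fun _ h => (oddCount_pos h.2 odd_one).ne' h.1.2.1]
    · rw [partCount_hCond_one_mem, partCount_gCond_one_mem, ih_shift _ _ _ (by omega)]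
  · rcases r with _ | r
    · rw [partCount_eq_zero fun _ h => (evenCount_pos h.2.2 (even_two_mul _)).ne' h.1.1,
        partCount_eq_zero fun _ h => (evenCount_pos h.2.2 even_two).ne' h.1.1]
    · rw [partCount_hCond_two_mul_mem, partCount_gCond_two_mem, ih_shift _ _ _ (by omega)]

theorem H_eq_G (i r s n : ℕ) (hi : i = 1 ∨ i = 2) :
    Hcount i r s n = Gcount i r s n := by
  rcases hi with rfl | rfl
  · exact partCount_hCond_eq_partCount_gCond n r s
  · show partCount (hCond r s (2 * (r + s + 2 - 1)) 3) n = partCount (gCond r s 3) n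
    rw [show 2 * (r + s + 2 - 1) = 2 * (r + s) + 2 by omega, partCount_hCond_shift,
      partCount_gCond_shift, partCount_hCond_eq_partCount_gCond]
end

section
/- For every nonnegative integer n and i ∈ {1,2}, the number of partitions of n with distinct odd parts, smallest odd part ≥ 2i−1, and smallest even part at least twice the quantity (total number of parts plus i−1), equals the number of partitions of n with parts ≥ 2i−1, no two parts equal or consecutive, and no two even parts equal or consecutive. -/
/-!
Write `L` for the number of parts and let "going down the staircase" subtract `2j` from the
`j`-th smallest part. This is a bijection from partitions whose parts differ by at least `2`
onto all partitions with `L` parts, lowering the sum by `L(L-1)`; it turns "even parts differ by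
at least `4`" into "even parts are distinct". On the other side, send the distinct odd parts down
the staircase and lower the even parts (all at least `2(L+i-1)`) by `2(L-1)` and send them up a
staircase: this makes them distinct, and again lowers the sum by `L(L-1)` in total. So both sides
correspond to the partitions into parts `≥ 2i-1` with distinct even parts.
-/

namespace GollnitzGordon

open Multiset

def stair (l : List ℕ) : List ℕ := l.mapIdx fun j a => a + 2 * j

def unstair (l : List ℕ) : List ℕ := l.mapIdx fun j a => a - 2 * j

section Staircase

variable {l : List ℕ}

@[simp] lemma length_stair (l : List ℕ) : (stair l).length = l.length := List.length_mapIdx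

@[simp] lemma length_unstair (l : List ℕ) : (unstair l).length = l.length := List.length_mapIdx

@[simp] lemma getElem_stair (l : List ℕ) (j : ℕ) (hj : j < (stair l).length) :
    (stair l)[j] = l[j]'(by simpa using hj) + 2 * j := List.getElem_mapIdx ..

@[simp] lemma getElem_unstair (l : List ℕ) (j : ℕ) (hj : j < (unstair l).length) :
    (unstair l)[j] = l[j]'(by simpa using hj) - 2 * j := List.getElem_mapIdx ..

lemma unstair_stair (l : List ℕ) : unstair (stair l) = l :=
  List.ext_getElem (by simp) fun j _ _ => by simp

lemma sum_stair (l : List ℕ) : (stair l).sum = l.sum + l.length * (l.length - 1) := by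
  induction l using List.reverseRecOn with
  | nil => rfl
  | append_singleton l a ih =>
    rw [stair, List.mapIdx_concat, ← stair, List.sum_append, ih]
    simp only [List.sum_append, List.sum_singleton, List.length_append, List.length_singleton]
    generalize l.length = n
    cases n with
    | zero => simp
    | succ n => simp; ring

lemma isChain_stair_iff {R R' : ℕ → ℕ → Prop}
    (hR : ∀ a b j, R (a + 2 * j) (b + 2 * (j + 1)) ↔ R' a b) :
    (stair l).IsChain R ↔ l.IsChain R' := by
  simp only [List.isChain_iff_getElem, length_stair, getElem_stair, hR]

lemma isChain_iff_pairwise_of_trans {R : ℕ → ℕ → Prop} (h : ∀ a b c, R a b → R b c → R a c) :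
    l.IsChain R ↔ l.Pairwise R :=
  @List.isChain_iff_pairwise _ _ _ ⟨h _ _ _⟩

lemma getElem_zero_add_le_of_isChain (h : l.IsChain (· + 2 ≤ ·)) :
    ∀ j (hj : j < l.length), l[0] + 2 * j ≤ l[j]
  | 0, _ => le_rfl
  | j + 1, hj => by
    have := getElem_zero_add_le_of_isChain h j (by omega)
    have := h.getElem j hj
    omega

lemma stair_unstair (h : l.IsChain (· + 2 ≤ ·)) : stair (unstair l) = l :=
  List.ext_getElem (by simp) fun j hj _ => by
    have := getElem_zero_add_le_of_isChain h j (by simpa using hj)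
    simp only [getElem_stair, getElem_unstair]
    omega

lemma isChain_stair_of_pairwise (h : l.Pairwise (· ≤ ·)) : (stair l).IsChain (· + 2 ≤ ·) :=
  (isChain_stair_iff (R' := (· ≤ ·)) fun _ _ _ => by omega).2 h.isChain

lemma pairwise_unstair (h : l.IsChain (· + 2 ≤ ·)) : (unstair l).Pairwise (· ≤ ·) := by
  rw [← stair_unstair h, isChain_stair_iff (R' := (· ≤ ·)) fun _ _ _ => by omega] at h
  exact List.isChain_iff_pairwise.1 h

lemma forall_mem_stair_iff {P : ℕ → Prop} (hP : ∀ a, P (a + 2) ↔ P a) :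
    (∀ x ∈ stair l, P x) ↔ ∀ x ∈ l, P x := by
  have hP' : ∀ a j, P (a + 2 * j) ↔ P a := fun a j => by
    induction j with
    | zero => rfl
    | succ j ih => rw [mul_add, mul_one, ← add_assoc, hP, ih]
  simp only [List.forall_mem_iff_getElem, length_stair, getElem_stair, hP']

lemma forall_mem_stair_le_iff (hl : l.Pairwise (· ≤ ·)) {k : ℕ} :
    (∀ x ∈ stair l, k ≤ x) ↔ ∀ x ∈ l, k ≤ x := by
  simp only [List.forall_mem_iff_getElem, length_stair, getElem_stair]
  refine ⟨fun h j hj => ?_, fun h j hj => (h j hj).trans (Nat.le_add_right _ _)⟩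
  have h0 := h 0 (by omega)
  rcases j.eq_zero_or_pos with rfl | hj0
  · simpa using h0
  · have := List.pairwise_iff_getElem.1 hl 0 j (by omega) hj hj0
    simp only [mul_zero, add_zero] at h0
    omega

end Staircase

lemma sort_coe_of_pairwise {l : List ℕ} (h : l.Pairwise (· ≤ ·)) : (l : Multiset ℕ).sort = l :=
  List.mergeSort_eq_self _ h

def Sparse (m : Multiset ℕ) : Prop := m.sort.IsChain (· + 2 ≤ ·)

def stairUp (c : Multiset ℕ) : Multiset ℕ := stair c.sort

def stairDown (m : Multiset ℕ) : Multiset ℕ := unstair m.sort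

section MultisetStaircase

variable {c m : Multiset ℕ}

@[simp] lemma card_stairUp (c : Multiset ℕ) : card (stairUp c) = card c := by
  simp [stairUp]

@[simp] lemma card_stairDown (m : Multiset ℕ) : card (stairDown m) = card m := by
  simp [stairDown]

lemma sort_stairUp (c : Multiset ℕ) : (stairUp c).sort = stair c.sort :=
  sort_coe_of_pairwise (List.isChain_iff_pairwise.1
    ((isChain_stair_of_pairwise (pairwise_sort c _)).imp fun _ _ h => by omega))

lemma sparse_stairUp (c : Multiset ℕ) : Sparse (stairUp c) := by
  rw [Sparse, sort_stairUp]
  exact isChain_stair_of_pairwise (pairwise_sort c _)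

lemma nodup_stairUp (c : Multiset ℕ) : (stairUp c).Nodup := by
  rw [← sort_eq (stairUp c) (· ≤ ·), coe_nodup]
  exact ((isChain_iff_pairwise_of_trans fun _ _ _ h1 h2 => by omega).1 (sparse_stairUp c)).imp
    fun h => by omega

lemma stairDown_stairUp (c : Multiset ℕ) : stairDown (stairUp c) = c := by
  rw [stairDown, sort_stairUp, unstair_stair, sort_eq]

lemma stairUp_stairDown (h : Sparse m) : stairUp (stairDown m) = m := by
  rw [stairUp, stairDown, sort_coe_of_pairwise (pairwise_unstair h), stair_unstair h, sort_eq]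

lemma sum_stairUp (c : Multiset ℕ) : (stairUp c).sum = c.sum + card c * (card c - 1) := by
  rw [stairUp, sum_coe, sum_stair, length_sort (· ≤ ·), ← sum_coe, sort_eq]

lemma sum_stairDown (h : Sparse m) : (stairDown m).sum + card m * (card m - 1) = m.sum := by
  conv_rhs => rw [← stairUp_stairDown h]
  rw [sum_stairUp, card_stairDown]

lemma forall_mem_stairUp_iff {P : ℕ → Prop} (hP : ∀ a, P (a + 2) ↔ P a) :
    (∀ x ∈ stairUp c, P x) ↔ ∀ x ∈ c, P x := by
  have := forall_mem_stair_iff (l := c.sort) hP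
  simpa only [stairUp, mem_coe, Multiset.mem_sort] using this

lemma forall_mem_stairUp_le_iff {k : ℕ} : (∀ x ∈ stairUp c, k ≤ x) ↔ ∀ x ∈ c, k ≤ x := by
  simpa only [stairUp, mem_coe, mem_sort] using forall_mem_stair_le_iff (pairwise_sort c _)

lemma forall_mem_stairDown_iff {P : ℕ → Prop} (hP : ∀ a, P (a + 2) ↔ P a) (h : Sparse m) :
    (∀ x ∈ stairDown m, P x) ↔ ∀ x ∈ m, P x := by
  conv_rhs => rw [← stairUp_stairDown h]
  exact (forall_mem_stairUp_iff hP).symm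

lemma forall_mem_stairDown_le_iff {k : ℕ} (h : Sparse m) :
    (∀ x ∈ stairDown m, k ≤ x) ↔ ∀ x ∈ m, k ≤ x := by
  conv_rhs => rw [← stairUp_stairDown h]
  exact forall_mem_stairUp_le_iff.symm

lemma sparse_of_nodup {r : ℕ} (h : m.Nodup) (hr : ∀ a ∈ m, a % 2 = r) : Sparse m := by
  rw [← sort_eq m (· ≤ ·), coe_nodup] at h
  refine ((pairwise_sort m _).and h).imp_of_mem (fun ha hb hab => ?_) |>.isChain
  have := hr _ ((mem_sort (· ≤ ·)).1 ha)
  have := hr _ ((mem_sort (· ≤ ·)).1 hb)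
  omega

end MultisetStaircase

lemma forall_mem_lt_of_pairwise {R : ℕ → ℕ → Prop} {l : List ℕ} (hR : ∀ a b, R a b → a < b)
    (h : l.Pairwise R) : ∀ a ∈ l, ∀ b ∈ l, a < b → R a b := by
  induction h with
  | nil => simp
  | @cons x l hx _ ih =>
    simp only [List.mem_cons]
    rintro a (rfl | ha) b (rfl | hb) hab
    · omega
    · exact hx b hb
    · exact absurd (hR _ _ (hx a ha)) (by omega)
    · exact ih a ha b hb hab

lemma gapCond_iff_pairwise (m : Multiset ℕ) :
    gapCond m ↔ m.sort.Pairwise fun a b => a + 2 ≤ b ∧ (Even a → Even b → a + 4 ≤ b) := by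
  have hmem : ∀ {a}, a ∈ m.sort ↔ a ∈ m := Multiset.mem_sort _
  have hnd : m.Nodup ↔ m.sort.Nodup := by rw [← coe_nodup, sort_eq]
  rw [gapCond, ← nodup_iff_count_le_one, hnd]
  constructor
  · rintro ⟨hnd, hgap, hgap4⟩
    refine ((pairwise_sort m _).and hnd).imp_of_mem fun ha hb hab => ?_
    have hlt := lt_of_le_of_ne hab.1 hab.2
    exact ⟨hgap _ (hmem.1 ha) _ (hmem.1 hb) hlt,
      fun ea eb => hgap4 _ (hmem.1 ha) _ (hmem.1 hb) ea eb hlt⟩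
  · intro h
    have hlt := forall_mem_lt_of_pairwise (fun a b h => by omega) h
    refine ⟨h.imp fun h => by omega, fun a ha b hb hab => (hlt a (hmem.2 ha) b (hmem.2 hb) hab).1,
      fun a ha b hb ea eb hab => (hlt a (hmem.2 ha) b (hmem.2 hb) hab).2 ea eb⟩

lemma gapCond_stairUp_iff (c : Multiset ℕ) : gapCond (stairUp c) ↔ (c.filter Even).Nodup := by
  rw [gapCond_iff_pairwise, sort_stairUp,
    ← isChain_iff_pairwise_of_trans fun a b c h1 h2 => ⟨by omega, fun _ _ => by omega⟩,
    isChain_stair_iff (R' := fun a b => a ≤ b ∧ (Even a → Even b → a + 2 ≤ b))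
      (fun a b j => by simp only [Nat.even_iff]; omega),
    isChain_iff_pairwise_of_trans fun a b c h1 h2 => by simp only [Nat.even_iff] at *; omega]
  conv_rhs => rw [← sort_eq c (· ≤ ·)]
  rw [filter_coe, coe_nodup, List.Nodup, List.pairwise_filter]
  simp only [decide_eq_true_eq]
  constructor
  · exact fun h => h.imp fun h ea eb => by have := h.2 ea eb; omega
  · refine fun h => ((pairwise_sort c _).and h).imp fun ⟨hle, hne⟩ => ⟨hle, fun ea eb => ?_⟩
    have := hne ea eb
    rw [Nat.even_iff] at ea eb
    omega

lemma filter_even_add_filter_odd (m : Multiset ℕ) : m.filter Even + m.filter Odd = m := by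
  simpa only [Nat.not_even_iff_odd] using filter_add_not (fun a => Even a) m

lemma one_le_card_of_mem {a : ℕ} {m : Multiset ℕ} (ha : a ∈ m) : 1 ≤ card m :=
  card_pos_iff_exists_mem.2 ⟨a, ha⟩

lemma filter_add_eq_left {p : ℕ → Prop} [DecidablePred p] {s t : Multiset ℕ}
    (hs : ∀ a ∈ s, p a) (ht : ∀ a ∈ t, ¬ p a) : (s + t).filter p = s := by
  rw [filter_add, filter_eq_self.2 hs, filter_eq_nil.2 ht, add_zero]

lemma sum_map_add_const (s : Multiset ℕ) (k : ℕ) : (s.map (· + k)).sum = s.sum + card s * k := by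
  rw [sum_map_add, map_id', map_const', sum_replicate, smul_eq_mul]

lemma map_sub_map_add {s : Multiset ℕ} {k : ℕ} (h : ∀ a ∈ s, k ≤ a) :
    (s.map (· - k)).map (· + k) = s := by
  rw [map_map]
  exact (map_congr rfl fun a ha => Nat.sub_add_cancel (h a ha)).trans (map_id s)

lemma map_add_map_sub (s : Multiset ℕ) (k : ℕ) : (s.map (· + k)).map (· - k) = s := by
  simp [map_map]

lemma even_add_two_iff (a : ℕ) : Even (a + 2) ↔ Even a := by simp [Nat.even_add]

lemma odd_add_two_iff (a : ℕ) : Odd (a + 2) ↔ Odd a := by simp [Nat.odd_add]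

/-- Splitting `[0, L)` at `s`: `∑_{j < L} 2j + ∑_{j < t} 2j = ∑_{j < s} 2j + 2(L-1)t`. -/
lemma triangle_split {L s t : ℕ} (hL : L = s + t) :
    L * (L - 1) + t * (t - 1) = s * (s - 1) + 2 * (L - 1) * t := by
  subst hL
  rcases s with _ | s
  · rcases t with _ | t
    · simp
    · simp; ring
  · rcases t with _ | t
    · simp
    · simp only [Nat.add_sub_cancel, show s + 1 + (t + 1) - 1 = s + t + 1 by omega]
      ring

def CompanionCond (d : ℕ) (m : Multiset ℕ) : Prop :=
  distinctOddParts m ∧ minOddGe m (2 * d + 1) ∧ minEvenGe m (2 * (card m + d))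

def EvenDistinctCond (d : ℕ) (c : Multiset ℕ) : Prop :=
  (∀ a ∈ c, 2 * d + 1 ≤ a) ∧ (c.filter Even).Nodup

def GordonCond (d : ℕ) (m : Multiset ℕ) : Prop :=
  (∀ a ∈ m, 2 * d + 1 ≤ a) ∧ gapCond m

section Compress

variable {d : ℕ} {m c : Multiset ℕ}

def compress (m : Multiset ℕ) : Multiset ℕ :=
  stairDown (m.filter Odd) + stairUp ((m.filter Even).map (· - 2 * (card m - 1)))

def expand (c : Multiset ℕ) : Multiset ℕ :=
  stairUp (c.filter Odd) + (stairDown (c.filter Even)).map (· + 2 * (card c - 1))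

lemma card_compress (m : Multiset ℕ) : card (compress m) = card m := by
  rw [compress, card_add, card_stairDown, card_stairUp, card_map, add_comm, ← card_add,
    filter_even_add_filter_odd]

lemma card_expand (c : Multiset ℕ) : card (expand c) = card c := by
  rw [expand, card_add, card_stairUp, card_map, card_stairDown, add_comm, ← card_add,
    filter_even_add_filter_odd]

lemma CompanionCond.sparse_filter_odd (h : CompanionCond d m) : Sparse (m.filter Odd) := by
  refine sparse_of_nodup (r := 1) (nodup_iff_count_le_one.2 fun a => ?_) fun a ha => ?_
  · rw [count_filter]
    split_ifs with ha
    exacts [h.1 a ha, zero_le_one]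
  · exact Nat.odd_iff.1 (mem_filter.1 ha).2

lemma CompanionCond.le_of_mem_filter_even (h : CompanionCond d m) :
    ∀ a ∈ m.filter Even, 2 * (card m + d) ≤ a :=
  fun a ha => h.2.2 a (mem_filter.1 ha).1 (mem_filter.1 ha).2

lemma CompanionCond.odd_of_mem_stairDown (h : CompanionCond d m) :
    ∀ a ∈ stairDown (m.filter Odd), Odd a :=
  (forall_mem_stairDown_iff odd_add_two_iff h.sparse_filter_odd).2 fun _ ha => (mem_filter.1 ha).2

lemma even_of_mem_stairUp_map_sub (m : Multiset ℕ) (k : ℕ) :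
    ∀ a ∈ stairUp ((m.filter Even).map (· - 2 * k)), Even a := by
  refine (forall_mem_stairUp_iff even_add_two_iff).2 fun b hb => ?_
  obtain ⟨e, he, rfl⟩ := mem_map.1 hb
  have := Nat.even_iff.1 (mem_filter.1 he).2
  exact Nat.even_iff.2 (by omega)

lemma filter_odd_compress (h : CompanionCond d m) :
    (compress m).filter Odd = stairDown (m.filter Odd) :=
  filter_add_eq_left h.odd_of_mem_stairDown fun a ha =>
    Nat.not_odd_iff_even.2 (even_of_mem_stairUp_map_sub m _ a ha)

lemma filter_even_compress (h : CompanionCond d m) :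
    (compress m).filter Even = stairUp ((m.filter Even).map (· - 2 * (card m - 1))) := by
  rw [compress, add_comm]
  exact filter_add_eq_left (even_of_mem_stairUp_map_sub m _) fun a ha =>
    Nat.not_even_iff_odd.2 (h.odd_of_mem_stairDown a ha)

lemma odd_of_mem_stairUp_filter_odd (c : Multiset ℕ) : ∀ a ∈ stairUp (c.filter Odd), Odd a :=
  (forall_mem_stairUp_iff odd_add_two_iff).2 fun _ ha => (mem_filter.1 ha).2

lemma EvenDistinctCond.sparse_filter_even (h : EvenDistinctCond d c) : Sparse (c.filter Even) :=
  sparse_of_nodup (r := 0) h.2 fun _ ha => Nat.even_iff.1 (mem_filter.1 ha).2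

lemma EvenDistinctCond.even_of_mem_map_stairDown (h : EvenDistinctCond d c) (k : ℕ) :
    ∀ a ∈ (stairDown (c.filter Even)).map (· + 2 * k), Even a := by
  simp only [mem_map, forall_exists_index, and_imp, forall_apply_eq_imp_iff₂]
  refine fun a ha => ?_
  have := (forall_mem_stairDown_iff even_add_two_iff h.sparse_filter_even).2
    (fun _ hb => (mem_filter.1 hb).2) a ha
  rw [Nat.even_add]
  simpa using this

lemma filter_odd_expand (h : EvenDistinctCond d c) :
    (expand c).filter Odd = stairUp (c.filter Odd) :=
  filter_add_eq_left (odd_of_mem_stairUp_filter_odd c) fun a ha =>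
    Nat.not_odd_iff_even.2 (h.even_of_mem_map_stairDown _ a ha)

lemma filter_even_expand (h : EvenDistinctCond d c) :
    (expand c).filter Even = (stairDown (c.filter Even)).map (· + 2 * (card c - 1)) := by
  rw [expand, add_comm]
  exact filter_add_eq_left (h.even_of_mem_map_stairDown _) fun a ha =>
    Nat.not_even_iff_odd.2 (odd_of_mem_stairUp_filter_odd c a ha)

lemma evenDistinctCond_compress (h : CompanionCond d m) : EvenDistinctCond d (compress m) := by
  refine ⟨fun a ha => ?_, by rw [filter_even_compress h]; exact nodup_stairUp _⟩
  rcases mem_add.1 ha with ha | ha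
  · refine (forall_mem_stairDown_le_iff h.sparse_filter_odd).2 (fun b hb => ?_) a ha
    exact h.2.1 b (mem_filter.1 hb).1 (mem_filter.1 hb).2
  · refine forall_mem_stairUp_le_iff.2 (fun b hb => ?_) a ha
    obtain ⟨e, he, rfl⟩ := mem_map.1 hb
    have := h.le_of_mem_filter_even e he
    have := one_le_card_of_mem (mem_filter.1 he).1
    omega

lemma sum_compress (h : CompanionCond d m) :
    (compress m).sum + card m * (card m - 1) = m.sum := by
  have hodd := sum_stairDown h.sparse_filter_odd
  have heven := sum_map_add_const ((m.filter Even).map (· - 2 * (card m - 1))) (2 * (card m - 1))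
  rw [map_sub_map_add fun a ha => by have := h.le_of_mem_filter_even a ha; omega, card_map] at heven
  have hsum := congrArg sum (filter_even_add_filter_odd m)
  have hcard := congrArg card (filter_even_add_filter_odd m)
  rw [sum_add] at hsum
  rw [card_add, add_comm] at hcard
  have := triangle_split hcard.symm
  rw [compress, sum_add, sum_stairUp, card_map]
  linarith

lemma expand_compress (h : CompanionCond d m) : expand (compress m) = m := by
  rw [expand, card_compress, filter_odd_compress h, filter_even_compress h,
    stairUp_stairDown h.sparse_filter_odd, stairDown_stairUp,
    map_sub_map_add fun a ha => by have := h.le_of_mem_filter_even a ha; omega, add_comm,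
    filter_even_add_filter_odd]

lemma companionCond_expand (h : EvenDistinctCond d c) : CompanionCond d (expand c) := by
  refine ⟨fun a ho => ?_, fun a ha ho => ?_, fun a ha he => ?_⟩
  · rw [← count_filter_of_pos ho, filter_odd_expand h]
    exact nodup_iff_count_le_one.1 (nodup_stairUp _) a
  · have ha' : a ∈ stairUp (c.filter Odd) := by
      rw [← filter_odd_expand h]; exact mem_filter.2 ⟨ha, ho⟩
    exact forall_mem_stairUp_le_iff.2 (fun b hb => h.1 b (mem_filter.1 hb).1) a ha'
  · have hc := one_le_card_of_mem ha
    have ha' : a ∈ (stairDown (c.filter Even)).map (· + 2 * (card c - 1)) := by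
      rw [← filter_even_expand h]; exact mem_filter.2 ⟨ha, he⟩
    obtain ⟨b, hb, rfl⟩ := mem_map.1 ha'
    have hb2 : 2 * d + 2 ≤ b := by
      refine (forall_mem_stairDown_le_iff h.sparse_filter_even).2 (fun e he => ?_) b hb
      have := h.1 e (mem_filter.1 he).1
      have := Nat.even_iff.1 (mem_filter.1 he).2
      omega
    rw [card_expand] at hc ⊢
    omega

lemma sum_expand (h : EvenDistinctCond d c) : (expand c).sum = c.sum + card c * (card c - 1) := by
  have heven := sum_stairDown h.sparse_filter_even
  have hsum := congrArg sum (filter_even_add_filter_odd c)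
  have hcard := congrArg card (filter_even_add_filter_odd c)
  rw [sum_add] at hsum
  rw [card_add, add_comm] at hcard
  have := triangle_split hcard.symm
  rw [expand, sum_add, sum_stairUp, sum_map_add_const, card_stairDown]
  linarith

lemma compress_expand (h : EvenDistinctCond d c) : compress (expand c) = c := by
  rw [compress, card_expand, filter_odd_expand h, filter_even_expand h, stairDown_stairUp,
    map_add_map_sub, stairUp_stairDown h.sparse_filter_even, add_comm, filter_even_add_filter_odd]

end Compress

lemma gordonCond_stairUp_iff {d : ℕ} {c : Multiset ℕ} :
    GordonCond d (stairUp c) ↔ EvenDistinctCond d c := by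
  rw [GordonCond, EvenDistinctCond, forall_mem_stairUp_le_iff, gapCond_stairUp_iff]

lemma GordonCond.sparse {d : ℕ} {m : Multiset ℕ} (h : GordonCond d m) : Sparse m :=
  ((gapCond_iff_pairwise m).1 h.2).isChain.imp fun _ _ h => h.1

lemma GordonCond.pos_of_mem {d a : ℕ} {m : Multiset ℕ} (h : GordonCond d m) (ha : a ∈ m) :
    0 < a := by
  have := h.1 a ha
  omega

lemma CompanionCond.pos_of_mem {d a : ℕ} {m : Multiset ℕ} (h : CompanionCond d m) (ha : a ∈ m) :
    0 < a := by
  refine Nat.pos_of_ne_zero fun ha0 => ?_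
  subst ha0
  have := h.2.2 0 ha Even.zero
  have := one_le_card_of_mem ha
  omega

lemma ncard_partition_eq_of_invOn {P Q : Multiset ℕ → Prop} (f g : Multiset ℕ → Multiset ℕ)
    (hP : ∀ m, P m → ∀ a ∈ m, 0 < a) (hQ : ∀ m, Q m → ∀ a ∈ m, 0 < a)
    (hf : ∀ m, P m → Q (f m) ∧ (f m).sum = m.sum ∧ g (f m) = m)
    (hg : ∀ m, Q m → P (g m) ∧ (g m).sum = m.sum ∧ f (g m) = m) (n : ℕ) :
    {p : n.Partition | P p.parts}.ncard = {p : n.Partition | Q p.parts}.ncard := by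
  refine Set.ncard_congr
    (fun p hp => ⟨f p.parts, hQ _ (hf _ hp).1 _, (hf _ hp).2.1.trans p.parts_sum⟩)
    (fun p hp => (hf _ hp).1) (fun p q hp hq hpq => Nat.Partition.ext ?_) fun q hq => ?_
  · rw [← (hf _ hp).2.2, ← (hf _ hq).2.2]
    exact congrArg g (congrArg Nat.Partition.parts hpq)
  · exact ⟨⟨g q.parts, hP _ (hg _ hq).1 _, (hg _ hq).2.1.trans q.parts_sum⟩, (hg _ hq).1,
      Nat.Partition.ext (hg _ hq).2.2⟩

theorem ncard_companionCond_eq_ncard_gordonCond (n d : ℕ) :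
    {p : n.Partition | CompanionCond d p.parts}.ncard =
      {p : n.Partition | GordonCond d p.parts}.ncard := by
  refine ncard_partition_eq_of_invOn (fun m => stairUp (compress m)) (fun m => expand (stairDown m))
    (fun _ h _ => h.pos_of_mem) (fun _ h _ => h.pos_of_mem) (fun m h => ?_) (fun m h => ?_) n
  · refine ⟨gordonCond_stairUp_iff.2 (evenDistinctCond_compress h), ?_, ?_⟩
    · rw [sum_stairUp, card_compress, sum_compress h]
    · rw [stairDown_stairUp, expand_compress h]
  · have hc : EvenDistinctCond d (stairDown m) := by
      rw [← gordonCond_stairUp_iff, stairUp_stairDown h.sparse]; exact h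
    refine ⟨companionCond_expand hc, ?_, ?_⟩
    · rw [sum_expand hc, card_stairDown, sum_stairDown h.sparse]
    · rw [compress_expand hc, stairUp_stairDown h.sparse]

end GollnitzGordon

open GollnitzGordon in
/-- The new companion to the Göllnitz–Gordon identities. -/
theorem new_companion (n i : ℕ) (hi : i = 1 ∨ i = 2) :
    {p : n.Partition | distinctOddParts p.parts ∧ minOddGe p.parts (2 * i - 1) ∧
        minEvenGe p.parts (2 * (Multiset.card p.parts + i - 1))}.ncard =
      {p : n.Partition | (∀ a ∈ p.parts, 2 * i - 1 ≤ a) ∧ gapCond p.parts}.ncard := by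
  obtain ⟨d, rfl⟩ : ∃ d, i = d + 1 := ⟨i - 1, by omega⟩
  have hodd : 2 * (d + 1) - 1 = 2 * d + 1 := by omega
  have heven : ∀ k, k + (d + 1) - 1 = k + d := fun k => by omega
  simpa only [hodd, heven, CompanionCond, GordonCond] using
    ncard_companionCond_eq_ncard_gordonCond n d
end

section
/- For all nonnegative integers r, s, n with 2(r+s) ≤ n: H_2(r,s,n) = H_1(r,s,n−2(r+s)). -/
namespace HAux

lemma up_inj : Function.Injective (fun a : ℕ => a + 2) := by
  intro a b hab
  simpa using hab

lemma map_up_down (m : Multiset ℕ) (hm : ∀ a ∈ m, 2 ≤ a) :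
    (m.map (fun a => a - 2)).map (fun a => a + 2) = m := by
  rw [Multiset.map_map]
  calc m.map ((fun a => a + 2) ∘ fun a => a - 2) = m.map id := by
        apply Multiset.map_congr rfl
        intro a ha
        have h2 := hm a ha
        simp only [Function.comp_apply, id_eq]
        omega
    _ = m := Multiset.map_id m

lemma map_down_up (m : Multiset ℕ) :
    (m.map (fun a => a + 2)).map (fun a => a - 2) = m := by
  rw [Multiset.map_map]
  calc m.map ((fun a => a - 2) ∘ fun a => a + 2) = m.map id := by
        apply Multiset.map_congr rfl
        intro a ha; simp
    _ = m := Multiset.map_id m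

lemma count_up (m : Multiset ℕ) (b : ℕ) :
    (m.map (fun a => a + 2)).count (b + 2) = m.count b :=
  Multiset.count_map_eq_count' _ _ up_inj b

lemma sum_up (m : Multiset ℕ) :
    (m.map (fun a => a + 2)).sum = m.sum + 2 * Multiset.card m := by
  induction m using Multiset.induction with
  | empty => simp
  | cons a s ih => simp [ih]; ring

lemma evenCount_up (m : Multiset ℕ) :
    evenCount (m.map (fun a => a + 2)) = evenCount m := by
  unfold evenCount
  rw [Multiset.filter_map, Multiset.card_map]
  congr 1
  apply Multiset.filter_congr
  intro a _
  simp [Function.comp, Nat.even_add_one, parity_simps]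

lemma oddCount_up (m : Multiset ℕ) :
    oddCount (m.map (fun a => a + 2)) = oddCount m := by
  unfold oddCount
  rw [Multiset.filter_map, Multiset.card_map]
  congr 1
  apply Multiset.filter_congr
  intro a _
  simp [Function.comp, Nat.odd_add_one, parity_simps]

lemma card_eq (m : Multiset ℕ) : Multiset.card m = evenCount m + oddCount m := by
  unfold evenCount oddCount
  have h1 : m.filter (fun a => Odd a) = m.filter (fun a => ¬ Even a) :=
    Multiset.filter_congr (fun a _ => (Nat.not_even_iff_odd).symm)
  rw [h1, ← Multiset.card_add, Multiset.filter_add_not]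

lemma one_le_r {m : Multiset ℕ} {r a : ℕ} (he : evenCount m = r) (ha : a ∈ m)
    (hev : Even a) : 1 ≤ r := by
  have hmem : a ∈ m.filter (fun a => Even a) := Multiset.mem_filter.2 ⟨ha, hev⟩
  have hc : 0 < (m.filter (fun a => Even a)).card := Multiset.card_pos.2
    (fun h0 => by simp [h0] at hmem)
  unfold evenCount at he
  omega

lemma mem_up {m : Multiset ℕ} {b : ℕ} :
    b ∈ m.map (fun a => a + 2) ↔ ∃ c ∈ m, c + 2 = b := by
  simp [Multiset.mem_map]

end HAux

open HAux in
theorem H2_eq_H1_shift (r s n : ℕ) (h : 2 * (r + s) ≤ n) :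
    Hcount 2 r s n = Hcount 1 r s (n - 2 * (r + s)) := by
  classical
  set S2 : Set n.Partition := {p : n.Partition | evenCount p.parts = r ∧ oddCount p.parts = s ∧
    distinctOddParts p.parts ∧ minEvenGe p.parts (2 * (r + s + 2 - 1)) ∧
    minOddGe p.parts (2 * 2 - 1)} with hS2
  set S1 : Set (n - 2 * (r + s)).Partition :=
    {p : (n - 2 * (r + s)).Partition | evenCount p.parts = r ∧ oddCount p.parts = s ∧
    distinctOddParts p.parts ∧ minEvenGe p.parts (2 * (r + s + 1 - 1)) ∧
    minOddGe p.parts (2 * 1 - 1)} with hS1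
  -- forward: parts all ≥ 2
  have hge2 : ∀ p : n.Partition, p ∈ S2 → ∀ a ∈ p.parts, 2 ≤ a := by
    rintro p ⟨he, ho, _, hme, hmo⟩ a ha
    rcases Nat.even_or_odd a with hev | hod
    · have h1 := hme a ha hev
      have h2 : 1 ≤ r := one_le_r he ha hev
      omega
    · have := hmo a ha hod; omega
  have hcard2 : ∀ p : n.Partition, p ∈ S2 → Multiset.card p.parts = r + s := by
    rintro p ⟨he, ho, _⟩
    rw [card_eq, he, ho]
  have hcard1 : ∀ p : (n - 2 * (r + s)).Partition, p ∈ S1 →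
      Multiset.card p.parts = r + s := by
    rintro p ⟨he, ho, _⟩
    rw [card_eq, he, ho]
  -- forward map
  have fwd : ∀ p : n.Partition, p ∈ S2 →
      (p.parts.map (fun a => a - 2)).sum = n - 2 * (r + s) ∧
      (∀ i, i ∈ p.parts.map (fun a => a - 2) → 0 < i) := by
    intro p hp
    have h2 := hge2 p hp
    have hup := map_up_down p.parts h2
    have hsum : (p.parts.map (fun a => a - 2)).sum + 2 * Multiset.card p.parts = p.parts.sum := by
      conv_rhs => rw [← hup]
      rw [sum_up, Multiset.card_map]
    constructor
    · have := p.parts_sum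
      have := hcard2 p hp
      omega
    · intro i hi
      obtain ⟨a, ha, rfl⟩ := Multiset.mem_map.1 hi
      obtain ⟨he, ho, _, hme, hmo⟩ := hp
      rcases Nat.even_or_odd a with hev | hod
      · have h1 := hme a ha hev
        have h2 : 1 ≤ r := one_le_r he ha hev
        omega
      · have := hmo a ha hod; omega
  -- the equivalence
  have key : ∀ p : n.Partition, p ∈ S2 → ∀ (q : (n - 2 * (r + s)).Partition),
      q.parts = p.parts.map (fun a => a - 2) → q ∈ S1 := by
    intro p hp q hq
    have h2 := hge2 p hp
    have hup : q.parts.map (fun a => a + 2) = p.parts := by rw [hq]; exact map_up_down _ h2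
    obtain ⟨he, ho, hd, hme, hmo⟩ := hp
    refine ⟨?_, ?_, ?_, ?_, ?_⟩
    · calc evenCount q.parts = evenCount (q.parts.map (fun a => a + 2)) :=
            (evenCount_up _).symm
        _ = evenCount p.parts := by rw [hup]
        _ = r := he
    · calc oddCount q.parts = oddCount (q.parts.map (fun a => a + 2)) :=
            (oddCount_up _).symm
        _ = oddCount p.parts := by rw [hup]
        _ = s := ho
    · intro b hb
      have : q.parts.count b = p.parts.count (b + 2) := by
        rw [← hup, count_up]
      rw [this]
      exact hd (b + 2) (by rcases hb with ⟨c, rfl⟩; exact ⟨c + 1, by ring⟩)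
    · intro b hb hbe
      have hb2 : b + 2 ∈ p.parts := by
        rw [← hup]; exact mem_up.2 ⟨b, hb, rfl⟩
      have : Even (b + 2) := by rcases hbe with ⟨c, rfl⟩; exact ⟨c + 1, by ring⟩
      have := hme _ hb2 this
      omega
    · intro b hb hbo
      have hb2 : b + 2 ∈ p.parts := by
        rw [← hup]; exact mem_up.2 ⟨b, hb, rfl⟩
      rcases hbo with ⟨c, rfl⟩; omega
  have bwd : ∀ q : (n - 2 * (r + s)).Partition, q ∈ S1 →
      (q.parts.map (fun a => a + 2)).sum = n ∧
      (∀ i, i ∈ q.parts.map (fun a => a + 2) → 0 < i) := by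
    intro q hq
    constructor
    · rw [sum_up, q.parts_sum, hcard1 q hq]; omega
    · intro i hi
      obtain ⟨a, _, rfl⟩ := Multiset.mem_map.1 hi
      omega
  have key' : ∀ q : (n - 2 * (r + s)).Partition, q ∈ S1 → ∀ (p : n.Partition),
      p.parts = q.parts.map (fun a => a + 2) → p ∈ S2 := by
    intro q hq p hp
    obtain ⟨he, ho, hd, hme, hmo⟩ := hq
    refine ⟨?_, ?_, ?_, ?_, ?_⟩
    · rw [hp, evenCount_up]; exact he
    · rw [hp, oddCount_up]; exact ho
    · intro b hb
      by_cases h2b : 2 ≤ b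
      · obtain ⟨c, rfl⟩ : ∃ c, b = c + 2 := ⟨b - 2, by omega⟩
        rw [hp, count_up]
        apply hd
        rcases hb with ⟨d, hd2⟩
        exact ⟨d - 1, by omega⟩
      · have : b ∉ p.parts := by
          rw [hp]
          intro hmem
          obtain ⟨c, _, rfl⟩ := Multiset.mem_map.1 hmem
          omega
        rw [Multiset.count_eq_zero_of_notMem this]
        omega
    · intro b hb hbe
      rw [hp] at hb
      obtain ⟨c, hc, rfl⟩ := Multiset.mem_map.1 hb
      have hce : Even c := by
        rcases hbe with ⟨d, hd2⟩
        exact ⟨d - 1, by omega⟩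
      have := hme c hc hce
      omega
    · intro b hb hbo
      rw [hp] at hb
      obtain ⟨c, hc, rfl⟩ := Multiset.mem_map.1 hb
      have hco : Odd c := by
        rcases hbo with ⟨d, hd2⟩
        exact ⟨d - 1, by omega⟩
      have := hmo c hc hco
      omega
  -- build the equiv
  let F : S2 → S1 := fun x =>
    ⟨⟨x.1.parts.map (fun a => a - 2), fun hi => (fwd x.1 x.2).2 _ hi, (fwd x.1 x.2).1⟩,
      key x.1 x.2 _ rfl⟩
  let G : S1 → S2 := fun x =>
    ⟨⟨x.1.parts.map (fun a => a + 2), fun hi => (bwd x.1 x.2).2 _ hi, (bwd x.1 x.2).1⟩,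
      key' x.1 x.2 _ rfl⟩
  have e : S2 ≃ S1 :=
    { toFun := F
      invFun := G
      left_inv := by
        rintro ⟨p, hp⟩
        apply Subtype.ext
        apply Nat.Partition.ext
        simp only [F, G]
        exact map_up_down p.parts (hge2 p hp)
      right_inv := by
        rintro ⟨q, hq⟩
        apply Subtype.ext
        apply Nat.Partition.ext
        simp only [F, G]
        exact map_down_up q.parts }
  have : Nat.card S2 = Nat.card S1 := Nat.card_congr e
  rwa [Nat.card_coe_set_eq, Nat.card_coe_set_eq] at this
end

section
/- For all nonnegative integers r, s, n: G_1(r,s,n) − G_2(r,s,n) = G_1(r, s−1, n−2(r+s)+1) + G_1(r−1, s, n−4(r+s)+2), where terms with a negative argument are 0. -/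
/-- `G i r s n` for integer arguments, 0 when any argument is negative. -/
noncomputable def G (i : ℕ) (r s n : ℤ) : ℤ :=
  if 0 ≤ r ∧ 0 ≤ s ∧ 0 ≤ n then
    ({p : Nat.Partition n.toNat | evenCount p.parts = r.toNat ∧
        oddCount p.parts = s.toNat ∧ (∀ a ∈ p.parts, 2 * i - 1 ≤ a) ∧
        gapCond p.parts}.ncard : ℤ)
  else 0

/-- auxiliary predicate on multisets -/
def Pm (k r s n : ℕ) (m : Multiset ℕ) : Prop :=
  evenCount m = r ∧ oddCount m = s ∧ (∀ a ∈ m, k ≤ a) ∧ gapCond m ∧ m.sum = n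

lemma evenCount_add_oddCount (m : Multiset ℕ) : evenCount m + oddCount m = Multiset.card m := by
  unfold evenCount oddCount
  rw [← Multiset.card_add]
  congr 1
  rw [show (Multiset.filter (fun a => Odd a) m) = (Multiset.filter (fun a => ¬ Even a) m) from
    Multiset.filter_congr (fun a _ => Nat.not_even_iff_odd.symm)]
  exact Multiset.filter_add_not _ m

lemma evenCount_map (t : Multiset ℕ) (f : ℕ → ℕ) (h : ∀ a ∈ t, (Even (f a) ↔ Even a)) :
    evenCount (t.map f) = evenCount t := by
  unfold evenCount
  rw [Multiset.filter_map, Multiset.card_map]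
  congr 1
  exact Multiset.filter_congr (fun a ha => h a ha)

lemma oddCount_map (t : Multiset ℕ) (f : ℕ → ℕ) (h : ∀ a ∈ t, (Even (f a) ↔ Even a)) :
    oddCount (t.map f) = oddCount t := by
  have h1 := evenCount_map t f h
  have h2 := evenCount_add_oddCount (t.map f)
  have h3 := evenCount_add_oddCount t
  rw [Multiset.card_map] at h2
  omega

lemma sum_map_sub_add (k : ℕ) (t : Multiset ℕ) (h : ∀ a ∈ t, k ≤ a) :
    (t.map (fun a => a - k)).sum + k * Multiset.card t = t.sum := by
  induction t using Multiset.induction with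
  | empty => simp
  | cons a t ih =>
    have ha := h a (Multiset.mem_cons_self a t)
    have iht := ih (fun b hb => h b (Multiset.mem_cons_of_mem hb))
    simp only [Multiset.map_cons, Multiset.sum_cons, Multiset.card_cons]
    have : k * (Multiset.card t + 1) = k * Multiset.card t + k := by ring
    omega

lemma sum_map_add (k : ℕ) (t : Multiset ℕ) :
    (t.map (fun a => a + k)).sum = t.sum + k * Multiset.card t := by
  induction t using Multiset.induction with
  | empty => simp
  | cons a t ih =>
    simp only [Multiset.map_cons, Multiset.sum_cons, Multiset.card_cons]
    have : k * (Multiset.card t + 1) = k * Multiset.card t + k := by ring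
    omega

lemma gapCond_mono {t m : Multiset ℕ} (h : t ≤ m) (hg : gapCond m) : gapCond t := by
  obtain ⟨h1, h2, h3⟩ := hg
  exact ⟨fun a => le_trans (Multiset.count_le_of_le a h) (h1 a),
    fun a ha b hb => h2 a (Multiset.mem_of_le h ha) b (Multiset.mem_of_le h hb),
    fun a ha b hb => h3 a (Multiset.mem_of_le h ha) b (Multiset.mem_of_le h hb)⟩

lemma gapCond_map_sub (k : ℕ) (hk : Even k) (t : Multiset ℕ) (h : ∀ a ∈ t, k ≤ a)
    (hg : gapCond t) : gapCond (t.map (fun a => a - k)) := by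
  obtain ⟨h1, h2, h3⟩ := hg
  refine ⟨?_, ?_, ?_⟩
  · rw [← Multiset.nodup_iff_count_le_one] at *
    exact Multiset.Nodup.map_on
      (fun x hx y hy hxy => by have := h x hx; have := h y hy; omega) h1
  · rintro a ha b hb hab
    obtain ⟨a', ha', rfl⟩ := Multiset.mem_map.1 ha
    obtain ⟨b', hb', rfl⟩ := Multiset.mem_map.1 hb
    have hka := h a' ha'; have hkb := h b' hb'
    have := h2 a' ha' b' hb' (by omega)
    omega
  · rintro a ha b hb hea heb hab
    obtain ⟨a', ha', rfl⟩ := Multiset.mem_map.1 ha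
    obtain ⟨b', hb', rfl⟩ := Multiset.mem_map.1 hb
    have hka := h a' ha'; have hkb := h b' hb'
    have hea' : Even a' := by rw [Nat.even_sub hka] at hea; tauto
    have heb' : Even b' := by rw [Nat.even_sub hkb] at heb; tauto
    have := h3 a' ha' b' hb' hea' heb' (by omega)
    omega

lemma gapCond_map_add_s8 (k : ℕ) (hk : Even k) (t : Multiset ℕ) (hg : gapCond t) :
    gapCond (t.map (fun a => a + k)) := by
  obtain ⟨h1, h2, h3⟩ := hg
  refine ⟨?_, ?_, ?_⟩
  · rw [← Multiset.nodup_iff_count_le_one] at *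
    exact Multiset.Nodup.map_on (fun x hx y hy hxy => by omega) h1
  · rintro a ha b hb hab
    obtain ⟨a', ha', rfl⟩ := Multiset.mem_map.1 ha
    obtain ⟨b', hb', rfl⟩ := Multiset.mem_map.1 hb
    have := h2 a' ha' b' hb' (by omega); omega
  · rintro a ha b hb hea heb hab
    obtain ⟨a', ha', rfl⟩ := Multiset.mem_map.1 ha
    obtain ⟨b', hb', rfl⟩ := Multiset.mem_map.1 hb
    have hea' : Even a' := by rw [Nat.even_add] at hea; tauto
    have heb' : Even b' := by rw [Nat.even_add] at heb; tauto
    have := h3 a' ha' b' hb' hea' heb' (by omega); omega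

lemma gapCond_cons_s8 (c : ℕ) (t : Multiset ℕ) (hc : c ∉ t) (h2 : ∀ b ∈ t, c + 2 ≤ b)
    (h4 : ∀ b ∈ t, Even c → Even b → c + 4 ≤ b) (hg : gapCond t) : gapCond (c ::ₘ t) := by
  obtain ⟨g1, g2, g3⟩ := hg
  refine ⟨?_, ?_, ?_⟩
  · rw [← Multiset.nodup_iff_count_le_one] at *
    exact Multiset.nodup_cons.2 ⟨hc, g1⟩
  · rintro a ha b hb hab
    rcases Multiset.mem_cons.1 ha with rfl | ha' <;> rcases Multiset.mem_cons.1 hb with rfl | hb'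
    · omega
    · exact h2 b hb'
    · have := h2 a ha'; omega
    · exact g2 a ha' b hb' hab
  · rintro a ha b hb hea heb hab
    rcases Multiset.mem_cons.1 ha with rfl | ha' <;> rcases Multiset.mem_cons.1 hb with rfl | hb'
    · omega
    · exact h4 b hb' hea heb
    · have := h2 a ha'; omega
    · exact g3 a ha' b hb' hea heb hab

lemma img_eq (N : ℕ) (Q : Multiset ℕ → Prop) (hQ : ∀ m, Q m → ∀ a ∈ m, 0 < a) :
    {m : Multiset ℕ | Q m ∧ m.sum = N} =
      (fun p : Nat.Partition N => p.parts) '' {p : Nat.Partition N | Q p.parts} := by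
  ext m
  simp only [Set.mem_image, Set.mem_setOf_eq]
  constructor
  · rintro ⟨hQm, hsum⟩
    exact ⟨⟨m, fun {a} ha => hQ m hQm a ha, hsum⟩, hQm, rfl⟩
  · rintro ⟨p, hp, rfl⟩
    exact ⟨hp, p.parts_sum⟩

lemma ncard_part (N : ℕ) (Q : Multiset ℕ → Prop) (hQ : ∀ m, Q m → ∀ a ∈ m, 0 < a) :
    {p : Nat.Partition N | Q p.parts}.ncard = {m : Multiset ℕ | Q m ∧ m.sum = N}.ncard := by
  rw [img_eq N Q hQ]
  exact (Set.ncard_image_of_injOn (fun p _ q _ h => Nat.Partition.ext h)).symm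

lemma finite_msets (N : ℕ) (Q : Multiset ℕ → Prop) (hQ : ∀ m, Q m → ∀ a ∈ m, 0 < a) :
    {m : Multiset ℕ | Q m ∧ m.sum = N}.Finite := by
  rw [img_eq N Q hQ]
  exact (Set.toFinite _).image _

lemma ncard_eq_of_maps (S T : Set (Multiset ℕ)) (F Ginv : Multiset ℕ → Multiset ℕ)
    (hF : ∀ m ∈ S, F m ∈ T) (hG : ∀ m ∈ T, Ginv m ∈ S)
    (hGF : ∀ m ∈ S, Ginv (F m) = m) (hFG : ∀ m ∈ T, F (Ginv m) = m) :
    S.ncard = T.ncard := by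
  have hinj : Set.InjOn F S := fun x hx y hy hxy => by rw [← hGF x hx, ← hGF y hy, hxy]
  rw [← Set.ncard_image_of_injOn hinj]
  congr 1
  ext m
  simp only [Set.mem_image]
  constructor
  · rintro ⟨x, hx, rfl⟩; exact hF x hx
  · intro hm; exact ⟨Ginv m, hG m hm, hFG m hm⟩

lemma erase_one_facts {m : Multiset ℕ} (hg : gapCond m) (h1 : 1 ∈ m) :
    1 ∉ m.erase 1 ∧ (∀ a ∈ m.erase 1, 3 ≤ a) := by
  have hcount : m.count 1 = 1 :=
    le_antisymm (hg.1 1) (Multiset.one_le_count_iff_mem.2 h1)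
  have h1t : 1 ∉ m.erase 1 := by
    intro h
    have := Multiset.count_pos.2 h
    rw [Multiset.count_erase_self, hcount] at this
    omega
  refine ⟨h1t, fun a ha => ?_⟩
  have ham : a ∈ m := Multiset.mem_of_mem_erase ha
  have ha1 : a ≠ 1 := fun h => h1t (h ▸ ha)
  have ha0 : a ≠ 0 := by
    rintro rfl
    have := hg.2.1 0 ham 1 h1 (by omega); omega
  have ha2 : a ≠ 2 := by
    rintro rfl
    have := hg.2.1 1 h1 2 ham (by omega); omega
  omega

lemma erase_two_facts {m : Multiset ℕ} (hg : gapCond m) (hmin : ∀ a ∈ m, 1 ≤ a) (h2 : 2 ∈ m) :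
    2 ∉ m.erase 2 ∧ (∀ a ∈ m.erase 2, 5 ≤ a) := by
  have hcount : m.count 2 = 1 :=
    le_antisymm (hg.1 2) (Multiset.one_le_count_iff_mem.2 h2)
  have h2t : 2 ∉ m.erase 2 := by
    intro h
    have := Multiset.count_pos.2 h
    rw [Multiset.count_erase_self, hcount] at this
    omega
  refine ⟨h2t, fun a ha => ?_⟩
  have ham : a ∈ m := Multiset.mem_of_mem_erase ha
  have ha2 : a ≠ 2 := fun h => h2t (h ▸ ha)
  have ha0 : 1 ≤ a := hmin a ham
  have ha1 : a ≠ 1 := by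
    rintro rfl
    have := hg.2.1 1 ham 2 h2 (by omega); omega
  have ha3 : a ≠ 3 := by
    rintro rfl
    have := hg.2.1 2 h2 3 ham (by omega); omega
  have ha4 : a ≠ 4 := by
    rintro rfl
    have := hg.2.2 2 h2 4 ham (by decide) (by decide) (by omega); omega
  omega

lemma cons_facts {m : Multiset ℕ} {c : ℕ} (hc : c ∈ m) :
    evenCount m = evenCount (m.erase c) + (if Even c then 1 else 0) ∧
    oddCount m = oddCount (m.erase c) + (if Odd c then 1 else 0) ∧
    m.sum = c + (m.erase c).sum ∧
    Multiset.card m = Multiset.card (m.erase c) + 1 := by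
  have hcons : c ::ₘ m.erase c = m := Multiset.cons_erase hc
  refine ⟨?_, ?_, ?_, ?_⟩
  · unfold evenCount
    rw [← hcons, Multiset.filter_cons]
    by_cases h : Even c
    · rw [if_pos h, if_pos h]; simp
    · rw [if_neg h, if_neg h]; simp
  · unfold oddCount
    rw [← hcons, Multiset.filter_cons]
    by_cases h : Odd c
    · rw [if_pos h, if_pos h]; simp
    · rw [if_neg h, if_neg h]; simp
  · conv_lhs => rw [← hcons]
    rw [Multiset.sum_cons]
  · conv_lhs => rw [← hcons]
    rw [Multiset.card_cons]

lemma mem1_constraints {r s n : ℕ} {m : Multiset ℕ} (hm : Pm 1 r s n m) (h1 : 1 ∈ m) :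
    1 ≤ s ∧ 2 * (r + s) ≤ n + 1 := by
  obtain ⟨he, ho, hmin, hg, hsum⟩ := hm
  obtain ⟨h1t, ht3⟩ := erase_one_facts hg h1
  obtain ⟨hce, hco, hcs, hcc⟩ := cons_facts h1
  rw [if_neg (by decide : ¬ Even (1:ℕ))] at hce
  rw [if_pos (by decide : Odd (1:ℕ))] at hco
  have hcard := evenCount_add_oddCount m
  have hb : Multiset.card (m.erase 1) • 3 ≤ (m.erase 1).sum := Multiset.card_nsmul_le_sum ht3
  rw [smul_eq_mul] at hb
  omega

lemma mem2_constraints {r s n : ℕ} {m : Multiset ℕ} (hm : Pm 1 r s n m) (h2 : 2 ∈ m) :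
    1 ≤ r ∧ 4 * (r + s) ≤ n + 2 := by
  obtain ⟨he, ho, hmin, hg, hsum⟩ := hm
  obtain ⟨h2t, ht5⟩ := erase_two_facts hg hmin h2
  obtain ⟨hce, hco, hcs, hcc⟩ := cons_facts h2
  rw [if_pos (by decide : Even (2:ℕ))] at hce
  rw [if_neg (by decide : ¬ Odd (2:ℕ))] at hco
  have hcard := evenCount_add_oddCount m
  have hb : Multiset.card (m.erase 2) • 5 ≤ (m.erase 2).sum := Multiset.card_nsmul_le_sum ht5
  rw [smul_eq_mul] at hb
  omega

lemma bij1 (r s n : ℕ) (hs : 1 ≤ s) (hn : 2 * (r + s) ≤ n + 1) :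
    {m : Multiset ℕ | Pm 1 r s n m ∧ 1 ∈ m}.ncard
      = {m : Multiset ℕ | Pm 1 r (s - 1) (n + 1 - 2 * (r + s)) m}.ncard := by
  apply ncard_eq_of_maps _ _ (fun m => (m.erase 1).map (fun a => a - 2))
      (fun m => 1 ::ₘ m.map (fun a => a + 2))
  · rintro m ⟨⟨he, ho, hmin, hg, hsum⟩, h1⟩
    obtain ⟨h1t, ht3⟩ := erase_one_facts hg h1
    obtain ⟨hce, hco, hcs, hcc⟩ := cons_facts h1
    rw [if_neg (by decide : ¬ Even (1:ℕ))] at hce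
    rw [if_pos (by decide : Odd (1:ℕ))] at hco
    have hcard := evenCount_add_oddCount m
    have hparity : ∀ a ∈ m.erase 1, (Even (a - 2) ↔ Even a) := fun a ha => by
      rw [Nat.even_sub (by have := ht3 a ha; omega)]; simp
    have hmsum := sum_map_sub_add 2 (m.erase 1) (fun a ha => by have := ht3 a ha; omega)
    refine ⟨?_, ?_, ?_, ?_, ?_⟩
    · rw [evenCount_map _ _ hparity]; omega
    · rw [oddCount_map _ _ hparity]; omega
    · rintro a ha
      obtain ⟨a', ha', rfl⟩ := Multiset.mem_map.1 ha
      have := ht3 a' ha'; omega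
    · exact gapCond_map_sub 2 (by decide) _ (fun a ha => by have := ht3 a ha; omega)
        (gapCond_mono (Multiset.erase_le 1 m) hg)
    · omega
  · rintro m ⟨he, ho, hmin, hg, hsum⟩
    have hcard := evenCount_add_oddCount m
    have hw3 : ∀ b ∈ m.map (fun a => a + 2), 3 ≤ b := by
      rintro b hb
      obtain ⟨a, ha, rfl⟩ := Multiset.mem_map.1 hb
      have := hmin a ha; omega
    have h1w : 1 ∉ m.map (fun a => a + 2) := fun h => by have := hw3 1 h; omega
    have hparity : ∀ a ∈ m, (Even (a + 2) ↔ Even a) := fun a _ => by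
      rw [Nat.even_add]
      have h2 : Even (2:ℕ) := by decide
      tauto
    have hec : evenCount (1 ::ₘ m.map (fun a => a + 2)) = evenCount (m.map (fun a => a + 2)) := by
      unfold evenCount
      rw [Multiset.filter_cons, if_neg (by decide : ¬ Even (1:ℕ))]; simp
    have hoc : oddCount (1 ::ₘ m.map (fun a => a + 2)) = oddCount (m.map (fun a => a + 2)) + 1 := by
      unfold oddCount
      rw [Multiset.filter_cons, if_pos (by decide : Odd (1:ℕ))]; simp
    have hsm := sum_map_add 2 m
    refine ⟨⟨?_, ?_, ?_, ?_, ?_⟩, Multiset.mem_cons_self 1 _⟩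
    · rw [hec, evenCount_map _ _ hparity]; omega
    · rw [hoc, oddCount_map _ _ hparity]; omega
    · rintro a ha
      rcases Multiset.mem_cons.1 ha with rfl | ha'
      · omega
      · have := hw3 a ha'; omega
    · exact gapCond_cons_s8 1 _ h1w (fun b hb => hw3 b hb)
        (fun b hb h1e => absurd h1e (by decide))
        (gapCond_map_add_s8 2 (by decide) m hg)
    · rw [Multiset.sum_cons, hsm]
      omega
  · rintro m ⟨⟨he, ho, hmin, hg, hsum⟩, h1⟩
    obtain ⟨h1t, ht3⟩ := erase_one_facts hg h1
    rw [Multiset.map_map]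
    have : Multiset.map ((fun a => a + 2) ∘ (fun a => a - 2)) (m.erase 1) = m.erase 1 := by
      rw [show Multiset.map ((fun a => a + 2) ∘ (fun a => a - 2)) (m.erase 1)
            = Multiset.map id (m.erase 1) from
          Multiset.map_congr rfl (fun a ha => by have := ht3 a ha; simp; omega),
        Multiset.map_id]
    rw [this, Multiset.cons_erase h1]
  · rintro m ⟨he, ho, hmin, hg, hsum⟩
    rw [Multiset.erase_cons_head, Multiset.map_map]
    rw [show Multiset.map ((fun a => a - 2) ∘ (fun a => a + 2)) m = Multiset.map id m from
        Multiset.map_congr rfl (fun a ha => by simp), Multiset.map_id]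

lemma bij2 (r s n : ℕ) (hr : 1 ≤ r) (hn : 4 * (r + s) ≤ n + 2) :
    {m : Multiset ℕ | Pm 1 r s n m ∧ 2 ∈ m}.ncard
      = {m : Multiset ℕ | Pm 1 (r - 1) s (n + 2 - 4 * (r + s)) m}.ncard := by
  apply ncard_eq_of_maps _ _ (fun m => (m.erase 2).map (fun a => a - 4))
      (fun m => 2 ::ₘ m.map (fun a => a + 4))
  · rintro m ⟨⟨he, ho, hmin, hg, hsum⟩, h2⟩
    obtain ⟨h2t, ht5⟩ := erase_two_facts hg hmin h2
    obtain ⟨hce, hco, hcs, hcc⟩ := cons_facts h2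
    rw [if_pos (by decide : Even (2:ℕ))] at hce
    rw [if_neg (by decide : ¬ Odd (2:ℕ))] at hco
    have hcard := evenCount_add_oddCount m
    have hparity : ∀ a ∈ m.erase 2, (Even (a - 4) ↔ Even a) := fun a ha => by
      rw [Nat.even_sub (by have := ht5 a ha; omega)]
      have h4 : Even (4:ℕ) := by decide
      tauto
    have hmsum := sum_map_sub_add 4 (m.erase 2) (fun a ha => by have := ht5 a ha; omega)
    refine ⟨?_, ?_, ?_, ?_, ?_⟩
    · rw [evenCount_map _ _ hparity]; omega
    · rw [oddCount_map _ _ hparity]; omega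
    · rintro a ha
      obtain ⟨a', ha', rfl⟩ := Multiset.mem_map.1 ha
      have := ht5 a' ha'; omega
    · exact gapCond_map_sub 4 (by decide) _ (fun a ha => by have := ht5 a ha; omega)
        (gapCond_mono (Multiset.erase_le 2 m) hg)
    · omega
  · rintro m ⟨he, ho, hmin, hg, hsum⟩
    have hcard := evenCount_add_oddCount m
    have hw5 : ∀ b ∈ m.map (fun a => a + 4), 5 ≤ b := by
      rintro b hb
      obtain ⟨a, ha, rfl⟩ := Multiset.mem_map.1 hb
      have := hmin a ha; omega
    have h2w : 2 ∉ m.map (fun a => a + 4) := fun h => by have := hw5 2 h; omega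
    have hparity : ∀ a ∈ m, (Even (a + 4) ↔ Even a) := fun a _ => by
      rw [Nat.even_add]
      have h4 : Even (4:ℕ) := by decide
      tauto
    have hec : evenCount (2 ::ₘ m.map (fun a => a + 4)) = evenCount (m.map (fun a => a + 4)) + 1 := by
      unfold evenCount
      rw [Multiset.filter_cons, if_pos (by decide : Even (2:ℕ))]; simp
    have hoc : oddCount (2 ::ₘ m.map (fun a => a + 4)) = oddCount (m.map (fun a => a + 4)) := by
      unfold oddCount
      rw [Multiset.filter_cons, if_neg (by decide : ¬ Odd (2:ℕ))]; simp
    have hsm := sum_map_add 4 m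
    refine ⟨⟨?_, ?_, ?_, ?_, ?_⟩, Multiset.mem_cons_self 2 _⟩
    · rw [hec, evenCount_map _ _ hparity]; omega
    · rw [hoc, oddCount_map _ _ hparity]; omega
    · rintro a ha
      rcases Multiset.mem_cons.1 ha with rfl | ha'
      · omega
      · have := hw5 a ha'; omega
    · refine gapCond_cons_s8 2 _ h2w (fun b hb => by have := hw5 b hb; omega) ?_
        (gapCond_map_add_s8 4 (by decide) m hg)
      rintro b hb _ hbe
      obtain ⟨a, ha, rfl⟩ := Multiset.mem_map.1 hb
      have ha1 := hmin a ha
      have hae : Even a := by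
        rw [Nat.even_add] at hbe
        have h4 : Even (4:ℕ) := by decide
        tauto
      have : a ≠ 1 := by rintro rfl; exact absurd hae (by decide)
      omega
    · rw [Multiset.sum_cons, hsm]
      omega
  · rintro m ⟨⟨he, ho, hmin, hg, hsum⟩, h2⟩
    obtain ⟨h2t, ht5⟩ := erase_two_facts hg hmin h2
    rw [Multiset.map_map]
    rw [show Multiset.map ((fun a => a + 4) ∘ (fun a => a - 4)) (m.erase 2)
          = Multiset.map id (m.erase 2) from
        Multiset.map_congr rfl (fun a ha => by have := ht5 a ha; simp; omega),
      Multiset.map_id, Multiset.cons_erase h2]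
  · rintro m ⟨he, ho, hmin, hg, hsum⟩
    rw [Multiset.erase_cons_head, Multiset.map_map]
    rw [show Multiset.map ((fun a => a - 4) ∘ (fun a => a + 4)) m = Multiset.map id m from
        Multiset.map_congr rfl (fun a ha => by simp), Multiset.map_id]

lemma G_eq (i k r s n : ℕ) (hk : k = 2 * i - 1) (hkpos : 1 ≤ k) :
    G i r s n = ({m : Multiset ℕ | Pm k r s n m}.ncard : ℤ) := by
  unfold G
  rw [if_pos ⟨Int.natCast_nonneg r, Int.natCast_nonneg s, Int.natCast_nonneg n⟩]
  simp only [Int.toNat_natCast]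
  rw [ncard_part n
      (fun m => evenCount m = r ∧ oddCount m = s ∧ (∀ a ∈ m, 2 * i - 1 ≤ a) ∧ gapCond m)
      (fun m hm a ha => by have := hm.2.2.1 a ha; omega)]
  congr 2
  ext m
  subst hk
  unfold Pm
  simp only [Set.mem_setOf_eq]
  tauto

theorem G_recurrence (r s n : ℕ) :
    G 1 r s n - G 2 r s n =
      G 1 r ((s : ℤ) - 1) ((n : ℤ) - 2 * ((r : ℤ) + s) + 1) +
        G 1 ((r : ℤ) - 1) s ((n : ℤ) - 4 * ((r : ℤ) + s) + 2) := by
  have hA := G_eq 1 1 r s n rfl le_rfl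
  have hB := G_eq 2 3 r s n rfl (by norm_num)
  have hfin : {m : Multiset ℕ | Pm 1 r s n m}.Finite := by
    refine Set.Finite.subset (finite_msets n
      (fun m => evenCount m = r ∧ oddCount m = s ∧ (∀ a ∈ m, 1 ≤ a) ∧ gapCond m)
      (fun m hm a ha => hm.2.2.1 a ha)) ?_
    rintro m ⟨he, ho, hmin, hg, hsum⟩
    exact ⟨⟨he, ho, hmin, hg⟩, hsum⟩
  have hsub : {m : Multiset ℕ | Pm 3 r s n m} ⊆ {m : Multiset ℕ | Pm 1 r s n m} := by
    rintro m ⟨he, ho, hmin, hg, hsum⟩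
    exact ⟨he, ho, fun a ha => by have := hmin a ha; omega, hg, hsum⟩
  have hdiff : {m : Multiset ℕ | Pm 1 r s n m} \ {m : Multiset ℕ | Pm 3 r s n m}
      = {m : Multiset ℕ | Pm 1 r s n m ∧ 1 ∈ m} ∪ {m : Multiset ℕ | Pm 1 r s n m ∧ 2 ∈ m} := by
    ext m
    simp only [Set.mem_diff, Set.mem_union, Set.mem_setOf_eq]
    constructor
    · rintro ⟨hm, hnot⟩
      by_cases h1 : 1 ∈ m
      · exact Or.inl ⟨hm, h1⟩
      by_cases h2 : 2 ∈ m
      · exact Or.inr ⟨hm, h2⟩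
      exfalso
      refine hnot ⟨hm.1, hm.2.1, fun a ha => ?_, hm.2.2.2.1, hm.2.2.2.2⟩
      have := hm.2.2.1 a ha
      have hne1 : a ≠ 1 := fun h => h1 (h ▸ ha)
      have hne2 : a ≠ 2 := fun h => h2 (h ▸ ha)
      omega
    · rintro (⟨hm, h1⟩ | ⟨hm, h2⟩) <;> refine ⟨hm, fun hmB => ?_⟩
      · have := hmB.2.2.1 1 h1; omega
      · have := hmB.2.2.1 2 h2; omega
  have hdisj : Disjoint {m : Multiset ℕ | Pm 1 r s n m ∧ 1 ∈ m}
      {m : Multiset ℕ | Pm 1 r s n m ∧ 2 ∈ m} := by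
    rw [Set.disjoint_left]
    rintro m ⟨hm, h1⟩ ⟨_, h2⟩
    have := hm.2.2.2.1.2.1 1 h1 2 h2 (by omega)
    omega
  have hkey := Set.ncard_diff_add_ncard_of_subset hsub hfin
  rw [hdiff, Set.ncard_union_eq hdisj
    (hfin.subset (fun m hm => hm.1)) (hfin.subset (fun m hm => hm.1))] at hkey
  have hterm1 : ({m : Multiset ℕ | Pm 1 r s n m ∧ 1 ∈ m}.ncard : ℤ)
      = G 1 r ((s : ℤ) - 1) ((n : ℤ) - 2 * ((r : ℤ) + s) + 1) := by
    by_cases hc : 1 ≤ s ∧ 2 * (r + s) ≤ n + 1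
    · obtain ⟨hs, hn⟩ := hc
      have e1 : (s : ℤ) - 1 = ((s - 1 : ℕ) : ℤ) := by omega
      have e2 : (n : ℤ) - 2 * ((r : ℤ) + s) + 1 = ((n + 1 - 2 * (r + s) : ℕ) : ℤ) := by omega
      rw [e1, e2, G_eq 1 1 r (s - 1) (n + 1 - 2 * (r + s)) rfl le_rfl,
        ← bij1 r s n hs hn]
    · have hM1 : {m : Multiset ℕ | Pm 1 r s n m ∧ 1 ∈ m} = ∅ := by
        ext m
        simp only [Set.mem_setOf_eq, Set.mem_empty_iff_false, iff_false]
        rintro ⟨hm, h1⟩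
        exact hc (mem1_constraints hm h1)
      rw [hM1]
      unfold G
      rw [if_neg (by omega)]
      simp
  have hterm2 : ({m : Multiset ℕ | Pm 1 r s n m ∧ 2 ∈ m}.ncard : ℤ)
      = G 1 ((r : ℤ) - 1) s ((n : ℤ) - 4 * ((r : ℤ) + s) + 2) := by
    by_cases hc : 1 ≤ r ∧ 4 * (r + s) ≤ n + 2
    · obtain ⟨hr, hn⟩ := hc
      have e1 : (r : ℤ) - 1 = ((r - 1 : ℕ) : ℤ) := by omega
      have e2 : (n : ℤ) - 4 * ((r : ℤ) + s) + 2 = ((n + 2 - 4 * (r + s) : ℕ) : ℤ) := by omega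
      rw [e1, e2, G_eq 1 1 (r - 1) s (n + 2 - 4 * (r + s)) rfl le_rfl,
        ← bij2 r s n hr hn]
    · have hM2 : {m : Multiset ℕ | Pm 1 r s n m ∧ 2 ∈ m} = ∅ := by
        ext m
        simp only [Set.mem_setOf_eq, Set.mem_empty_iff_false, iff_false]
        rintro ⟨hm, h2⟩
        exact hc (mem2_constraints hm h2)
      rw [hM2]
      unfold G
      rw [if_neg (by omega)]
      simp
  rw [hA, hB, ← hterm1, ← hterm2]
  omega
end

section
/- There is a bijection between partitions of n with exactly r ≥ 1 even parts and s odd parts, distinct odd parts, smallest odd part ≥ 3, and smallest even part exactly 2(r+s), and partitions of n−4(r+s)+2 with exactly r−1 even parts and s odd parts, distinct odd parts, smallest even part ≥ 2(r+s−1), and smallest odd part ≥ 1; the bijection removes the smallest even part and subtracts 2 from every other part. -/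
open Multiset

lemma sum_map_add2 (X : Multiset ℕ) : (X.map (· + 2)).sum = X.sum + 2 * Multiset.card X := by
  induction X using Multiset.induction_on with
  | empty => simp
  | cons a X ih => simp only [map_cons, sum_cons, card_cons, ih]; ring

lemma sum_map_sub2 (X : Multiset ℕ) (h : ∀ b ∈ X, 2 ≤ b) :
    X.sum = (X.map (· - 2)).sum + 2 * Multiset.card X := by
  induction X using Multiset.induction_on with
  | empty => simp
  | cons a X ih =>
    have ha : 2 ≤ a := h a (mem_cons_self ..)
    have := ih (fun x hx => h x (mem_cons_of_mem hx))
    simp only [map_cons, sum_cons, card_cons]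
    omega

lemma count_map_add2 (X : Multiset ℕ) (a : ℕ) : (X.map (· + 2)).count (a + 2) = X.count a :=
  Multiset.count_map_eq_count' _ _ (fun x y h => by omega) a

lemma count_map_sub2 (X : Multiset ℕ) (h : ∀ b ∈ X, 2 ≤ b) (a : ℕ) :
    (X.map (· - 2)).count a = X.count (a + 2) := by
  induction X using Multiset.induction_on with
  | empty => simp
  | cons b X ih =>
    have hb : 2 ≤ b := h b (mem_cons_self ..)
    have hih := ih (fun x hx => h x (mem_cons_of_mem hx))
    simp only [map_cons, count_cons, hih]
    have : (a = b - 2) ↔ (a + 2 = b) := by omega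
    simp [this]

lemma filterCard_map (p : ℕ → Prop) [DecidablePred p] (f : ℕ → ℕ) (X : Multiset ℕ)
    (h : ∀ a ∈ X, p (f a) ↔ p a) :
    Multiset.card ((X.map f).filter p) = Multiset.card (X.filter p) := by
  rw [← countP_eq_card_filter, ← countP_eq_card_filter, countP_map, ← countP_eq_card_filter]
  exact countP_congr rfl (fun x hx => propext (h x hx))

lemma card_eq_counts (X : Multiset ℕ) : Multiset.card X = evenCount X + oddCount X := by
  have h1 : X.filter (fun a => Even a) + X.filter (fun a => ¬ Even a) = X := filter_add_not _ _
  have h2 : X.filter (fun a => Odd a) = X.filter (fun a => ¬ Even a) :=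
    filter_congr (fun x _ => Nat.not_even_iff_odd.symm)
  unfold evenCount oddCount
  rw [h2, ← card_add, h1]

lemma fwd_cond (r s : ℕ) (hr : 1 ≤ r) (P : Multiset ℕ)
    (hpos : ∀ a ∈ P, 0 < a)
    (he : evenCount P = r) (ho : oddCount P = s) (hd : distinctOddParts P)
    (h3o : minOddGe P 3) (hcm : 2 * (r + s) ∈ P) (hme : minEvenGe P (2 * (r + s))) :
    (∀ b ∈ (P.erase (2 * (r + s))).map (· - 2), 0 < b) ∧
    ((P.erase (2 * (r + s))).map (· - 2)).sum + 4 * (r + s) = P.sum + 2 ∧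
    (evenCount ((P.erase (2 * (r + s))).map (· - 2)) = r - 1 ∧
     oddCount ((P.erase (2 * (r + s))).map (· - 2)) = s ∧
     distinctOddParts ((P.erase (2 * (r + s))).map (· - 2)) ∧
     minEvenGe ((P.erase (2 * (r + s))).map (· - 2)) (2 * (r + s - 1)) ∧
     minOddGe ((P.erase (2 * (r + s))).map (· - 2)) 1) := by
  set c := 2 * (r + s) with hcdef
  have hceven : Even c := ⟨r + s, by omega⟩
  have h3 : ∀ a ∈ P.erase c, 3 ≤ a := by
    intro a ha
    have haP := Multiset.mem_of_mem_erase ha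
    rcases Nat.even_or_odd a with heva | hodda
    · have hac := hme a haP heva
      by_cases hrs : 2 ≤ r + s
      · omega
      · exfalso
        have hrs1 : r + s = 1 := by omega
        have hcard1 : Multiset.card (P.filter (fun x => Even x)) = 1 := by
          have h1 : evenCount P = 1 := by omega
          simpa [evenCount] using h1
        obtain ⟨x, hx⟩ := Multiset.card_eq_one.mp hcard1
        have hcx : c ∈ P.filter (fun x => Even x) := Multiset.mem_filter.mpr ⟨hcm, hceven⟩
        have hxc : x = c := by rw [hx] at hcx; exact (Multiset.mem_singleton.mp hcx).symm
        have hax : a ∈ P.filter (fun x => Even x) := Multiset.mem_filter.mpr ⟨haP, heva⟩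
        have hac' : a = c := by rw [hx, hxc] at hax; simpa using hax
        have hcnt : P.count c = 1 := by
          have h2 := Multiset.count_filter (p := fun x => Even x) (a := c) (s := P)
          rw [hx, hxc] at h2
          simpa [hceven] using h2.symm
        have hge : 1 ≤ Multiset.count a (P.erase c) := Multiset.one_le_count_iff_mem.mpr ha
        rw [hac', Multiset.count_erase_self, hcnt] at hge
        omega
    · have := h3o a haP hodda; omega
  have h2e : ∀ a ∈ P.erase c, 2 ≤ a := fun a ha => by have := h3 a ha; omega
  have hcardP : Multiset.card P = r + s := by rw [card_eq_counts, he, ho]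
  have hcarde : Multiset.card (P.erase c) = r + s - 1 := by
    rw [Multiset.card_erase_of_mem hcm, hcardP]; rfl
  have hsum_e : c + (P.erase c).sum = P.sum := by
    conv_rhs => rw [← Multiset.cons_erase hcm]
    rw [Multiset.sum_cons]
  have hsum2 := sum_map_sub2 _ h2e
  have heC : evenCount P = evenCount (P.erase c) + 1 := by
    conv_lhs => rw [← Multiset.cons_erase hcm]
    unfold evenCount
    rw [Multiset.filter_cons_of_pos _ hceven, Multiset.card_cons]
  have hoC : oddCount P = oddCount (P.erase c) := by
    conv_lhs => rw [← Multiset.cons_erase hcm]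
    unfold oddCount
    rw [Multiset.filter_cons_of_neg _ (by simpa [Nat.not_odd_iff_even] using hceven)]
  refine ⟨?_, ?_, ?_, ?_, ?_, ?_, ?_⟩
  · intro b hb
    obtain ⟨a, ha, rfl⟩ := Multiset.mem_map.mp hb
    have := h3 a ha; omega
  · rw [hcarde] at hsum2; omega
  · unfold evenCount
    rw [filterCard_map _ _ _ (fun a ha => by
      rw [Nat.even_sub (by have := h2e a ha; omega)]; simp)]
    have : evenCount (P.erase c) = r - 1 := by omega
    simpa [evenCount] using this
  · unfold oddCount
    rw [filterCard_map _ _ _ (fun a ha => by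
      rw [← Nat.not_even_iff_odd, ← Nat.not_even_iff_odd,
        Nat.even_sub (by have := h2e a ha; omega)]; simp)]
    have : oddCount (P.erase c) = s := by omega
    simpa [oddCount] using this
  · intro a hodd
    rw [count_map_sub2 _ h2e]
    calc Multiset.count (a + 2) (P.erase c) ≤ Multiset.count (a + 2) P :=
          Multiset.count_le_of_le _ (Multiset.erase_le _ _)
      _ ≤ 1 := hd (a + 2) (by rcases hodd with ⟨k, hk⟩; exact ⟨k + 1, by omega⟩)
  · intro a ha hae
    obtain ⟨b, hb, rfl⟩ := Multiset.mem_map.mp ha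
    have hb3 := h3 b hb
    have hbe : Even b := by
      rw [Nat.even_sub (by omega : 2 ≤ b)] at hae
      simpa using hae
    have := hme b (Multiset.mem_of_mem_erase hb) hbe
    omega
  · intro a ha _
    obtain ⟨b, hb, rfl⟩ := Multiset.mem_map.mp ha
    have := h3 b hb; omega

lemma bwd_cond (r s : ℕ) (hr : 1 ≤ r) (R : Multiset ℕ)
    (hpos : ∀ a ∈ R, 0 < a)
    (he : evenCount R = r - 1) (ho : oddCount R = s) (hd : distinctOddParts R)
    (hme : minEvenGe R (2 * (r + s - 1))) :
    (∀ b ∈ (2 * (r + s)) ::ₘ R.map (· + 2), 0 < b) ∧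
    ((2 * (r + s)) ::ₘ R.map (· + 2)).sum + 2 = R.sum + 4 * (r + s) ∧
    (evenCount ((2 * (r + s)) ::ₘ R.map (· + 2)) = r ∧
     oddCount ((2 * (r + s)) ::ₘ R.map (· + 2)) = s ∧
     distinctOddParts ((2 * (r + s)) ::ₘ R.map (· + 2)) ∧
     minOddGe ((2 * (r + s)) ::ₘ R.map (· + 2)) 3 ∧
     2 * (r + s) ∈ (2 * (r + s)) ::ₘ R.map (· + 2) ∧
     minEvenGe ((2 * (r + s)) ::ₘ R.map (· + 2)) (2 * (r + s))) := by
  set c := 2 * (r + s) with hcdef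
  have hceven : Even c := ⟨r + s, by omega⟩
  have hcardR : Multiset.card R = r - 1 + s := by rw [card_eq_counts, he, ho]
  refine ⟨?_, ?_, ?_, ?_, ?_, ?_, Multiset.mem_cons_self _ _, ?_⟩
  · intro b hb
    rcases Multiset.mem_cons.mp hb with rfl | hb
    · omega
    · obtain ⟨a, ha, rfl⟩ := Multiset.mem_map.mp hb; omega
  · rw [Multiset.sum_cons, sum_map_add2, hcardR]; omega
  · unfold evenCount
    rw [Multiset.filter_cons_of_pos _ hceven, Multiset.card_cons,
      filterCard_map _ _ _ (fun a _ => by rw [Nat.even_add]; simp)]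
    have h1 : Multiset.card (Multiset.filter Even R) = r - 1 := he
    omega
  · unfold oddCount
    rw [Multiset.filter_cons_of_neg _ (by simpa [Nat.not_odd_iff_even] using hceven),
      filterCard_map _ _ _ (fun a _ => by
        rw [← Nat.not_even_iff_odd, ← Nat.not_even_iff_odd, Nat.even_add]; simp)]
    exact ho
  · intro a hodd
    have hac : a ≠ c := by
      intro h; rw [h] at hodd; exact (Nat.not_odd_iff_even.mpr hceven) hodd
    rw [Multiset.count_cons, if_neg hac]
    rcases Nat.lt_or_ge a 2 with h2 | h2
    · have : a ∉ R.map (· + 2) := by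
        intro hmem
        obtain ⟨b, hb, rfl⟩ := Multiset.mem_map.mp hmem
        omega
      simp [Multiset.count_eq_zero_of_notMem this]
    · have ha2 : a = (a - 2) + 2 := by omega
      rw [ha2, count_map_add2]
      exact hd (a - 2) (by rcases hodd with ⟨k, hk⟩; exact ⟨k - 1, by omega⟩)
  · intro a ha hodd
    rcases Multiset.mem_cons.mp ha with rfl | ha
    · exact absurd hodd (Nat.not_odd_iff_even.mpr hceven)
    · obtain ⟨b, hb, rfl⟩ := Multiset.mem_map.mp ha
      have := hpos b hb; omega
  · intro a ha hae
    rcases Multiset.mem_cons.mp ha with rfl | ha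
    · exact le_refl _
    · obtain ⟨b, hb, rfl⟩ := Multiset.mem_map.mp ha
      have hbe : Even b := by
        rw [Nat.even_add] at hae; simpa using hae
      have := hme b hb hbe
      omega

theorem bijection_remove_smallest_even (r s n : ℕ) (hr : 1 ≤ r) (m : ℕ)
    (hm : (m : ℤ) = (n : ℤ) - 4 * ((r : ℤ) + s) + 2) :
    ∃ e : {p : n.Partition // evenCount p.parts = r ∧ oddCount p.parts = s ∧
            distinctOddParts p.parts ∧ minOddGe p.parts 3 ∧
            2 * (r + s) ∈ p.parts ∧ minEvenGe p.parts (2 * (r + s))} ≃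
          {q : m.Partition // evenCount q.parts = r - 1 ∧ oddCount q.parts = s ∧
            distinctOddParts q.parts ∧ minEvenGe q.parts (2 * (r + s - 1)) ∧
            minOddGe q.parts 1},
      ∀ p, (e p).1.parts = (p.1.parts.erase (2 * (r + s))).map (· - 2) := by
  classical
  have F := fun (p : {p : n.Partition // evenCount p.parts = r ∧ oddCount p.parts = s ∧
            distinctOddParts p.parts ∧ minOddGe p.parts 3 ∧
            2 * (r + s) ∈ p.parts ∧ minEvenGe p.parts (2 * (r + s))}) =>
    fwd_cond r s hr p.1.parts (fun a ha => p.1.parts_pos ha) p.2.1 p.2.2.1 p.2.2.2.1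
      p.2.2.2.2.1 p.2.2.2.2.2.1 p.2.2.2.2.2.2
  have G := fun (q : {q : m.Partition // evenCount q.parts = r - 1 ∧ oddCount q.parts = s ∧
            distinctOddParts q.parts ∧ minEvenGe q.parts (2 * (r + s - 1)) ∧
            minOddGe q.parts 1}) =>
    bwd_cond r s hr q.1.parts (fun a ha => q.1.parts_pos ha) q.2.1 q.2.2.1 q.2.2.2.1
      q.2.2.2.2.1
  refine ⟨⟨fun p => ⟨⟨(p.1.parts.erase (2 * (r + s))).map (· - 2),
      fun {b} hb => (F p).1 b hb, ?_⟩, (F p).2.2⟩,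
    fun q => ⟨⟨(2 * (r + s)) ::ₘ q.1.parts.map (· + 2),
      fun {b} hb => (G q).1 b hb, ?_⟩, (G q).2.2⟩, fun p => ?_, fun q => ?_⟩, fun p => rfl⟩
  · have h1 := (F p).2.1
    have h2 := p.1.parts_sum
    omega
  · have h1 := (G q).2.1
    have h2 := q.1.parts_sum
    omega
  · apply Subtype.ext
    apply Nat.Partition.ext
    show (2 * (r + s)) ::ₘ ((p.1.parts.erase (2 * (r + s))).map (· - 2)).map (· + 2) = p.1.parts
    rw [Multiset.map_map]
    have h2 : ∀ a ∈ p.1.parts.erase (2 * (r + s)), ((· + 2) ∘ (· - 2)) a = id a := by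
      intro a ha
      have haP := Multiset.mem_of_mem_erase ha
      simp only [Function.comp_apply, id_eq]
      rcases Nat.even_or_odd a with h | h
      · have := p.2.2.2.2.2.2 a haP h; omega
      · have := p.2.2.2.2.1 a haP h; omega
    rw [Multiset.map_congr rfl h2, Multiset.map_id]
    exact Multiset.cons_erase p.2.2.2.2.2.1
  · apply Subtype.ext
    apply Nat.Partition.ext
    show (((2 * (r + s)) ::ₘ q.1.parts.map (· + 2)).erase (2 * (r + s))).map (· - 2) = q.1.parts
    rw [Multiset.erase_cons_head, Multiset.map_map]
    rw [Multiset.map_congr (g := id) rfl (fun a _ => by simp), Multiset.map_id]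
end

section
/- For every n, the number of partitions of n with distinct odd parts, all odd parts ≥ 3, and smallest even part at least 2(ℓ+1) where ℓ is the number of parts, equals the number of partitions of n with all parts ≥ 3, parts pairwise differing by at least 2, and even parts pairwise differing by at least 4; for n = 9 this common value is 2. -/
/-!
Both families are equinumerous with the pairs `(X, Y)` of multisets of even numbers of weight
`ΣX + ΣY + k (k + 2) + |Y|²`, where `k = |X| + |Y|`. The tool is the staircase
`a₀ ≤ a₁ ≤ ⋯ ↦ a₀ + s, a₁ + s + 2, a₂ + s + 4, …`, a bijection from multisets onto multisets
whose parts are `≥ s` and pairwise differ by at least 2; for odd `s` it sends even entries to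
odd parts.

In a partition of the first kind, the odd parts are the staircase from 3 of `X` and the even
parts are `Y` shifted by `2 (ℓ + 1)`. A partition of the second kind is the staircase from 3 of
`C = X + (staircase from 1 of Y)`: two of its parts are even and differ by exactly 2 precisely
when they come from two equal odd entries of `C`, so its gap conditions say exactly that the odd
entries of `C` are distinct, i.e. that they form a staircase from 1.
-/

namespace List

def stair : ℕ → List ℕ → List ℕ
  | _, [] => []
  | s, a :: l => (a + s) :: stair (s + 2) l

def unstair : ℕ → List ℕ → List ℕ
  | _, [] => []
  | s, a :: l => (a - s) :: unstair (s + 2) l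

variable {s : ℕ} {l : List ℕ}

@[simp] theorem stair_nil (s : ℕ) : stair s [] = [] := rfl

@[simp] theorem stair_cons (s a : ℕ) (l : List ℕ) :
    stair s (a :: l) = (a + s) :: stair (s + 2) l := rfl

@[simp] theorem unstair_nil (s : ℕ) : unstair s [] = [] := rfl

@[simp] theorem unstair_cons (s a : ℕ) (l : List ℕ) :
    unstair s (a :: l) = (a - s) :: unstair (s + 2) l := rfl

@[simp] theorem length_stair (s : ℕ) (l : List ℕ) : (l.stair s).length = l.length := by
  induction l generalizing s <;> simp [*]

theorem sum_stair (s : ℕ) (l : List ℕ) :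
    (l.stair s).sum + l.length = l.sum + l.length * (s + l.length) := by
  induction l generalizing s with
  | nil => simp
  | cons a l ih => simp only [stair_cons, sum_cons, length_cons]; linarith [ih (s + 2)]

theorem unstair_stair (s : ℕ) (l : List ℕ) : (l.stair s).unstair s = l := by
  induction l generalizing s <;> simp [*]

theorem stair_unstair (hl : l.Pairwise (fun a b => a + 2 ≤ b)) (hs : ∀ a ∈ l, s ≤ a) :
    (l.unstair s).stair s = l := by
  induction l generalizing s with
  | nil => rfl
  | cons a l ih =>
    rw [pairwise_cons] at hl
    have ha := hs a mem_cons_self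
    simp only [unstair_cons, stair_cons, Nat.sub_add_cancel ha]
    rw [ih hl.2 fun b hb => by have := hl.1 b hb; omega]

theorem le_of_mem_stair {a : ℕ} (ha : a ∈ l.stair s) : s ≤ a := by
  induction l generalizing s with
  | nil => simp at ha
  | cons b l ih =>
    rcases mem_cons.mp ha with rfl | ha
    · omega
    · have := ih ha; omega

theorem forall_mem_stair_iff {P : ℕ → Prop} (hP : ∀ x, P (x + 2) ↔ P x) :
    (∀ a ∈ l.stair s, P a) ↔ ∀ x ∈ l, P (x + s) := by
  induction l generalizing s with
  | nil => simp
  | cons a l ih => simp [ih, ← add_assoc, hP]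

theorem isChain_stair_iff {R Q : ℕ → ℕ → Prop}
    (h : ∀ t x y, t % 2 = s % 2 → (R (x + t) (y + (t + 2)) ↔ Q x y)) :
    (l.stair s).IsChain R ↔ l.IsChain Q := by
  induction l generalizing s with
  | nil => simp
  | cons a l ih =>
    cases l with
    | nil => simp
    | cons b l =>
      rw [stair_cons, stair_cons, isChain_cons_cons, isChain_cons_cons, h s a b rfl,
        ← stair_cons, ih fun t x y ht => h t x y (by omega)]

theorem pairwise_stair_iff {R Q : ℕ → ℕ → Prop} (hR : ∀ a b c, R a b → R b c → R a c)
    (hQ : ∀ a b c, Q a b → Q b c → Q a c)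
    (h : ∀ t x y, t % 2 = s % 2 → (R (x + t) (y + (t + 2)) ↔ Q x y)) :
    (l.stair s).Pairwise R ↔ l.Pairwise Q := by
  have : Trans R R R := ⟨hR _ _ _⟩
  have : Trans Q Q Q := ⟨hQ _ _ _⟩
  rw [← isChain_iff_pairwise, ← isChain_iff_pairwise, isChain_stair_iff h]

theorem pairwise_stair_iff_sorted :
    (l.stair s).Pairwise (fun a b => a + 2 ≤ b) ↔ l.Pairwise (· ≤ ·) :=
  pairwise_stair_iff (fun _ _ _ => by omega) (fun _ _ _ => le_trans) fun _ _ _ _ => by omega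

end List

namespace Multiset

def stair (s : ℕ) (m : Multiset ℕ) : Multiset ℕ := (m.sort.stair s : List ℕ)

variable {s : ℕ} {m : Multiset ℕ}

theorem pairwise_sort_iff {r : ℕ → ℕ → Prop} (hr : ∀ a b, r a b → a < b) :
    m.sort.Pairwise r ↔ m.Nodup ∧ ∀ a ∈ m, ∀ b ∈ m, a < b → r a b := by
  constructor
  · intro h
    refine ⟨?_, fun a ha b hb hab => ?_⟩
    · rw [← sort_eq m (· ≤ ·), coe_nodup]
      exact h.imp fun hab => (hr _ _ hab).ne
    let S a b := (a < b → r a b) ∧ (b < a → r b a)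
    have : Std.Symm S := ⟨fun _ _ h => ⟨h.2, h.1⟩⟩
    have hS : m.sort.Pairwise S :=
      h.imp fun {a b} h => ⟨fun _ => h, fun hba => absurd (hr a b h) (by omega)⟩
    exact (hS.forall ((mem_sort _).mpr ha) ((mem_sort _).mpr hb) hab.ne).1 hab
  · rintro ⟨hnd, h⟩
    have hnd' : m.sort.Nodup := by rwa [← coe_nodup, sort_eq]
    refine ((pairwise_sort m _).and hnd').imp_of_mem fun ha hb hab => ?_
    exact h _ ((mem_sort _).mp ha) _ ((mem_sort _).mp hb) (lt_of_le_of_ne hab.1 hab.2)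

theorem pairwise_sort_stair : (m.sort.stair s).Pairwise (fun a b => a + 2 ≤ b) :=
  List.pairwise_stair_iff_sorted.mpr (pairwise_sort m _)

theorem sort_stair (s : ℕ) (m : Multiset ℕ) : (m.stair s).sort = m.sort.stair s := by
  rw [stair, coe_sort, List.mergeSort_eq_self _ (pairwise_sort_stair.imp (by omega))]

@[simp] theorem card_stair (s : ℕ) (m : Multiset ℕ) : card (m.stair s) = card m := by
  simp [stair]

theorem sum_stair (s : ℕ) (m : Multiset ℕ) :
    (m.stair s).sum + card m = m.sum + card m * (s + card m) := by
  have := List.sum_stair s m.sort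
  rw [length_sort] at this
  rw [stair, sum_coe, this, ← sum_coe, sort_eq]

theorem forall_mem_stair_iff {P : ℕ → Prop} (hP : ∀ x, P (x + 2) ↔ P x) :
    (∀ a ∈ m.stair s, P a) ↔ ∀ x ∈ m, P (x + s) := by
  simp only [stair, mem_coe, List.forall_mem_stair_iff hP, mem_sort]

theorem le_of_mem_stair {a : ℕ} (ha : a ∈ m.stair s) : s ≤ a :=
  List.le_of_mem_stair (mem_coe.mp ha)

theorem nodup_stair (s : ℕ) (m : Multiset ℕ) : (m.stair s).Nodup :=
  coe_nodup.mpr (pairwise_sort_stair.imp (by omega))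

theorem stair_injective (s : ℕ) : Function.Injective (stair s) := by
  intro m m' h
  have := congrArg (fun m => m.sort.unstair s) h
  simp only [sort_stair, List.unstair_stair] at this
  rw [← sort_eq m (· ≤ ·), this, sort_eq]

theorem exists_stair_eq (hm : m.sort.Pairwise (fun a b => a + 2 ≤ b)) (hs : ∀ a ∈ m, s ≤ a) :
    ∃ X : Multiset ℕ, X.stair s = m := by
  have hl : (m.sort.unstair s).stair s = m.sort :=
    List.stair_unstair hm fun a ha => hs a ((mem_sort _).mp ha)
  have hsorted : (m.sort.unstair s).Pairwise (· ≤ ·) :=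
    List.pairwise_stair_iff_sorted.mp (hl ▸ hm)
  refine ⟨m.sort.unstair s, ?_⟩
  rw [stair, coe_sort, List.mergeSort_eq_self _ hsorted, hl, sort_eq]

theorem filter_even_add {E O : Multiset ℕ} (hE : ∀ a ∈ E, Even a) (hO : ∀ a ∈ O, Odd a) :
    (E + O).filter Even = E := by
  rw [filter_add, filter_eq_self.mpr hE,
    filter_eq_nil.mpr fun a ha => Nat.not_even_iff_odd.mpr (hO a ha), add_zero]

theorem filter_odd_add {E O : Multiset ℕ} (hE : ∀ a ∈ E, Even a) (hO : ∀ a ∈ O, Odd a) :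
    (E + O).filter Odd = O := by
  rw [filter_add, filter_eq_self.mpr hO,
    filter_eq_nil.mpr fun a ha => Nat.not_odd_iff_even.mpr (hE a ha), zero_add]

theorem filter_even_add_filter_odd (m : Multiset ℕ) : m.filter Even + m.filter Odd = m := by
  simpa only [Nat.not_even_iff_odd] using filter_add_not Even m

theorem even_of_mem_map_add_two_mul {Y : Multiset ℕ} (c : ℕ) (hY : ∀ y ∈ Y, Even y) :
    ∀ a ∈ Y.map (· + 2 * c), Even a := by
  simp only [mem_map, forall_exists_index, and_imp, forall_apply_eq_imp_iff₂]
  exact fun y hy => (hY y hy).add (even_two_mul c)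

theorem map_add_map_tsub_of_le {E : Multiset ℕ} {c : ℕ} (h : ∀ a ∈ E, c ≤ a) :
    (E.map (· - c)).map (· + c) = E := by
  rw [map_map]
  exact (map_congr rfl fun a ha => Nat.sub_add_cancel (h a ha)).trans (map_id E)

theorem exists_even_stair_eq {O : Multiset ℕ} (hs : Odd s) (hO : O.Nodup)
    (hodd : ∀ a ∈ O, Odd a) (hge : ∀ a ∈ O, s ≤ a) :
    ∃ X : Multiset ℕ, (∀ x ∈ X, Even x) ∧ X.stair s = O := by
  have hsep : O.sort.Pairwise (fun a b => a + 2 ≤ b) := by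
    refine (pairwise_sort_iff fun a b h => by omega).mpr ⟨hO, fun a ha b hb hab => ?_⟩
    have := hodd a ha; have := hodd b hb
    rw [Nat.odd_iff] at *
    omega
  obtain ⟨X, rfl⟩ := exists_stair_eq hsep hge
  refine ⟨X, fun x hx => ?_, rfl⟩
  have := (forall_mem_stair_iff (P := Odd) (by simp [parity_simps])).mp hodd x hx
  rw [Nat.odd_iff] at hs this
  rw [Nat.even_iff]
  omega

theorem odd_of_mem_stair {X : Multiset ℕ} (hs : Odd s) (hX : ∀ x ∈ X, Even x) :
    ∀ a ∈ X.stair s, Odd a :=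
  (forall_mem_stair_iff (by simp [parity_simps])).mpr fun x hx => (hX x hx).add_odd hs

end Multiset

open Multiset

theorem distinctOddParts_iff_nodup_filter (m : Multiset ℕ) :
    distinctOddParts m ↔ (m.filter Odd).Nodup := by
  simp only [distinctOddParts, nodup_iff_count_le_one, count_filter]
  refine forall_congr' fun a => ?_
  split_ifs with ha <;> simp [ha]

theorem distinctOddParts_iff_pairwise_sort (m : Multiset ℕ) :
    distinctOddParts m ↔ m.sort.Pairwise (fun a b => a ≤ b ∧ (Odd a → a ≠ b)) := by
  have hfilter : m.sort.Pairwise (fun a b => Odd a → a ≠ b) ↔ (m.sort.filter (Odd ·)).Nodup := by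
    rw [List.Nodup, List.pairwise_filter]
    refine List.Pairwise.iff fun a b => ?_
    simp only [decide_eq_true_eq]
    exact ⟨fun h ha _ => h ha, fun h ha hab => h ha (hab ▸ ha) hab⟩
  rw [List.pairwise_and_iff, and_iff_right (pairwise_sort m _), hfilter,
    distinctOddParts_iff_nodup_filter, ← coe_nodup, ← filter_coe, sort_eq]

theorem gapCond_iff_pairwise_sort (m : Multiset ℕ) :
    gapCond m ↔ m.sort.Pairwise (fun a b => a + 2 ≤ b ∧ (Even a → a + 2 ≠ b)) := by
  rw [pairwise_sort_iff fun a b h => by omega, nodup_iff_count_le_one, gapCond]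
  refine and_congr_right fun _ => ⟨fun ⟨hsep, heven⟩ a ha b hb hab => ?_, fun h => ⟨?_, ?_⟩⟩
  · refine ⟨hsep a ha b hb hab, fun hea hab2 => ?_⟩
    have := heven a ha b hb hea (hab2 ▸ hea.add even_two) hab
    omega
  · exact fun a ha b hb hab => (h a ha b hb hab).1
  · intro a ha b hb hea heb hab
    obtain ⟨hle, hne⟩ := h a ha b hb hab
    have := hne hea
    rw [Nat.even_iff] at hea heb
    omega

theorem gapCond_stair_iff {s : ℕ} (hs : Odd s) (m : Multiset ℕ) :
    gapCond (m.stair s) ↔ distinctOddParts m := by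
  rw [gapCond_iff_pairwise_sort, sort_stair, distinctOddParts_iff_pairwise_sort]
  refine List.pairwise_stair_iff (fun a b c h h' => ⟨by omega, fun _ => by omega⟩)
    (fun a b c h h' => ⟨h.1.trans h'.1, fun ha hac => h.2 ha (by omega)⟩) fun t x y ht => ?_
  rw [Nat.odd_iff] at hs
  simp only [Nat.even_iff, Nat.odd_iff]
  omega

theorem ncard_setOf_parts_eq {α : Type*} {n : ℕ} {P : Multiset ℕ → Prop} {S : Set α}
    {f : α → Multiset ℕ} (hf : S.InjOn f) (hpos : ∀ m, P m → ∀ a ∈ m, 0 < a)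
    (himage : f '' S = {m | P m ∧ m.sum = n}) :
    {p : n.Partition | P p.parts}.ncard = S.ncard := by
  rw [← Set.ncard_image_of_injective _ fun p q h => Nat.Partition.ext h,
    ← hf.ncard_image, himage]
  congr 1
  ext m
  constructor
  · rintro ⟨p, hp, rfl⟩
    exact ⟨hp, p.parts_sum⟩
  · rintro ⟨hm, hsum⟩
    exact ⟨⟨m, hpos m hm _, hsum⟩, hm, rfl⟩

def IsFirstKind (m : Multiset ℕ) : Prop :=
  distinctOddParts m ∧ minOddGe m 3 ∧ minEvenGe m (2 * (card m + 1))

def IsSecondKind (m : Multiset ℕ) : Prop := (∀ a ∈ m, 3 ≤ a) ∧ gapCond m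

def weight (X Y : Multiset ℕ) : ℕ :=
  X.sum + Y.sum + (card X + card Y) * (card X + card Y + 2) + card Y * card Y

def evenPairs (n : ℕ) : Set (Multiset ℕ × Multiset ℕ) :=
  {XY | (∀ x ∈ XY.1, Even x) ∧ (∀ y ∈ XY.2, Even y) ∧ weight XY.1 XY.2 = n}

def encodeFirst (X Y : Multiset ℕ) : Multiset ℕ :=
  Y.map (· + 2 * (card X + card Y + 1)) + X.stair 3

def encodeSecond (X Y : Multiset ℕ) : Multiset ℕ := (X + Y.stair 1).stair 3

section First

variable {X Y : Multiset ℕ}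

@[simp] theorem card_encodeFirst : card (encodeFirst X Y) = card X + card Y := by
  simp [encodeFirst, add_comm]

theorem sum_encodeFirst : (encodeFirst X Y).sum = weight X Y := by
  have := sum_stair 3 X
  simp only [encodeFirst, weight, sum_add, sum_map_add, map_id', map_const', sum_replicate,
    smul_eq_mul]
  nlinarith

theorem filter_even_encodeFirst (hX : ∀ x ∈ X, Even x) (hY : ∀ y ∈ Y, Even y) :
    (encodeFirst X Y).filter Even = Y.map (· + 2 * (card X + card Y + 1)) :=
  filter_even_add (even_of_mem_map_add_two_mul _ hY) (odd_of_mem_stair (by decide : Odd 3) hX)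

theorem filter_odd_encodeFirst (hX : ∀ x ∈ X, Even x) (hY : ∀ y ∈ Y, Even y) :
    (encodeFirst X Y).filter Odd = X.stair 3 :=
  filter_odd_add (even_of_mem_map_add_two_mul _ hY) (odd_of_mem_stair (by decide : Odd 3) hX)

theorem isFirstKind_encodeFirst (hX : ∀ x ∈ X, Even x) (hY : ∀ y ∈ Y, Even y) :
    IsFirstKind (encodeFirst X Y) := by
  refine ⟨?_, fun a ha hodd => ?_, fun a ha heven => ?_⟩
  · rw [distinctOddParts_iff_nodup_filter, filter_odd_encodeFirst hX hY]
    exact nodup_stair 3 X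
  · have := mem_filter.mpr ⟨ha, hodd⟩
    rw [filter_odd_encodeFirst hX hY] at this
    exact le_of_mem_stair this
  · have := mem_filter.mpr ⟨ha, heven⟩
    rw [filter_even_encodeFirst hX hY] at this
    obtain ⟨y, -, rfl⟩ := mem_map.mp this
    rw [card_encodeFirst]
    omega

theorem encodeFirst_injOn (n : ℕ) : (evenPairs n).InjOn fun XY => encodeFirst XY.1 XY.2 := by
  rintro ⟨X, Y⟩ ⟨hX, hY, -⟩ ⟨X', Y'⟩ ⟨hX', hY', -⟩ h
  dsimp only at h
  obtain rfl : X = X' := stair_injective 3 <| by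
    rw [← filter_odd_encodeFirst hX hY, h, filter_odd_encodeFirst hX' hY']
  have hcard : card Y = card Y' := by
    simpa using congrArg card h
  have hmap : Y.map (· + 2 * (card X + card Y + 1)) = Y'.map (· + 2 * (card X + card Y + 1)) := by
    rw [← filter_even_encodeFirst hX hY, h, filter_even_encodeFirst hX' hY', hcard]
  rw [map_injective (add_left_injective _) hmap]

theorem exists_encodeFirst_eq {m : Multiset ℕ} (hm : IsFirstKind m) :
    ∃ X Y, (∀ x ∈ X, Even x) ∧ (∀ y ∈ Y, Even y) ∧ encodeFirst X Y = m := by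
  obtain ⟨hdist, hodd, heven⟩ := hm
  obtain ⟨X, hX, hXm⟩ := exists_even_stair_eq (by decide)
    ((distinctOddParts_iff_nodup_filter m).mp hdist) (fun a ha => (mem_filter.mp ha).2)
    fun a ha => hodd a (mem_filter.mp ha).1 (mem_filter.mp ha).2
  refine ⟨X, (m.filter Even).map (· - 2 * (card m + 1)), hX, ?_, ?_⟩
  · simp only [mem_map, mem_filter, forall_exists_index, and_imp]
    rintro _ a - ha rfl
    exact ha.tsub (even_two_mul _)
  · have hcard : card X + card ((m.filter Even).map (· - 2 * (card m + 1))) = card m := by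
      rw [card_map, ← card_stair 3 X, hXm, add_comm, ← card_add, filter_even_add_filter_odd]
    rw [encodeFirst, hcard, hXm,
      map_add_map_tsub_of_le fun a ha => heven a (mem_filter.mp ha).1 (mem_filter.mp ha).2,
      filter_even_add_filter_odd]

theorem image_encodeFirst (n : ℕ) :
    (fun XY => encodeFirst XY.1 XY.2) '' evenPairs n = {m | IsFirstKind m ∧ m.sum = n} := by
  ext m
  constructor
  · rintro ⟨⟨X, Y⟩, ⟨hX, hY, rfl⟩, rfl⟩
    exact ⟨isFirstKind_encodeFirst hX hY, sum_encodeFirst⟩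
  · rintro ⟨hm, rfl⟩
    obtain ⟨X, Y, hX, hY, rfl⟩ := exists_encodeFirst_eq hm
    exact ⟨(X, Y), ⟨hX, hY, sum_encodeFirst.symm⟩, rfl⟩

end First

theorem IsFirstKind.pos {m : Multiset ℕ} (hm : IsFirstKind m) : ∀ a ∈ m, 0 < a := by
  intro a ha
  rcases Nat.even_or_odd a with h | h
  · have := hm.2.2 a ha h
    omega
  · exact h.pos

theorem ncard_isFirstKind (n : ℕ) :
    {p : n.Partition | IsFirstKind p.parts}.ncard = (evenPairs n).ncard :=
  ncard_setOf_parts_eq (encodeFirst_injOn n) (fun _ => IsFirstKind.pos) (image_encodeFirst n)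

section Second

variable {X Y : Multiset ℕ}

theorem sum_encodeSecond : (encodeSecond X Y).sum = weight X Y := by
  have h3 := sum_stair 3 (X + Y.stair 1)
  have h1 := sum_stair 1 Y
  simp only [card_add, card_stair, sum_add] at h3
  simp only [encodeSecond, weight]
  nlinarith

theorem isSecondKind_encodeSecond (hX : ∀ x ∈ X, Even x) (hY : ∀ y ∈ Y, Even y) :
    IsSecondKind (encodeSecond X Y) := by
  refine ⟨fun a ha => le_of_mem_stair ha, (gapCond_stair_iff (by decide) _).mpr ?_⟩
  rw [distinctOddParts_iff_nodup_filter, filter_odd_add hX (odd_of_mem_stair odd_one hY)]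
  exact nodup_stair 1 Y

theorem encodeSecond_injOn (n : ℕ) : (evenPairs n).InjOn fun XY => encodeSecond XY.1 XY.2 := by
  rintro ⟨X, Y⟩ ⟨hX, hY, -⟩ ⟨X', Y'⟩ ⟨hX', hY', -⟩ h
  dsimp only at hX hY hX' hY'
  have hC : X + Y.stair 1 = X' + Y'.stair 1 := stair_injective 3 h
  have hodd := odd_of_mem_stair odd_one hY
  have hodd' := odd_of_mem_stair odd_one hY'
  obtain rfl : X = X' := by
    rw [← filter_even_add hX hodd, hC, filter_even_add hX' hodd']
  obtain rfl : Y = Y' := stair_injective 1 <| by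
    rw [← filter_odd_add hX hodd, hC, filter_odd_add hX' hodd']
  rfl

theorem exists_encodeSecond_eq {m : Multiset ℕ} (hm : IsSecondKind m) :
    ∃ X Y, (∀ x ∈ X, Even x) ∧ (∀ y ∈ Y, Even y) ∧ encodeSecond X Y = m := by
  obtain ⟨hge, hgap⟩ := hm
  obtain ⟨C, rfl⟩ := exists_stair_eq (((gapCond_iff_pairwise_sort m).mp hgap).imp And.left) hge
  have hC := (gapCond_stair_iff (by decide) C).mp hgap
  obtain ⟨Y, hY, hYC⟩ := exists_even_stair_eq (by decide)
    ((distinctOddParts_iff_nodup_filter C).mp hC) (fun a ha => (mem_filter.mp ha).2)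
    fun a ha => (mem_filter.mp ha).2.pos
  refine ⟨C.filter Even, Y, fun x hx => (mem_filter.mp hx).2, hY, ?_⟩
  rw [encodeSecond, hYC, filter_even_add_filter_odd]

theorem image_encodeSecond (n : ℕ) :
    (fun XY => encodeSecond XY.1 XY.2) '' evenPairs n = {m | IsSecondKind m ∧ m.sum = n} := by
  ext m
  constructor
  · rintro ⟨⟨X, Y⟩, ⟨hX, hY, rfl⟩, rfl⟩
    exact ⟨isSecondKind_encodeSecond hX hY, sum_encodeSecond⟩
  · rintro ⟨hm, rfl⟩
    obtain ⟨X, Y, hX, hY, rfl⟩ := exists_encodeSecond_eq hm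
    exact ⟨(X, Y), ⟨hX, hY, sum_encodeSecond.symm⟩, rfl⟩

end Second

theorem ncard_isSecondKind (n : ℕ) :
    {p : n.Partition | IsSecondKind p.parts}.ncard = (evenPairs n).ncard :=
  ncard_setOf_parts_eq (encodeSecond_injOn n) (fun _ hm a ha => by have := hm.1 a ha; omega)
    (image_encodeSecond n)

theorem evenPairs_nine : evenPairs 9 = {({6}, 0), ({0}, {0})} := by
  ext ⟨X, Y⟩
  simp only [evenPairs, weight, Set.mem_ofPred_eq, Set.mem_insert_iff, Set.mem_singleton_iff,
    Prod.mk.injEq]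
  constructor
  · rintro ⟨hX, hY, hw⟩
    have hXsum := sum_induction Even X (fun _ _ => Even.add) .zero hX
    have hYsum := sum_induction Even Y (fun _ _ => Even.add) .zero hY
    rw [Nat.even_iff] at hXsum hYsum
    obtain ⟨a, ha⟩ : ∃ a, card X = a := ⟨_, rfl⟩
    obtain ⟨b, hb⟩ : ∃ b, card Y = b := ⟨_, rfl⟩
    rw [ha, hb] at hw
    have hk : a + b ≤ 2 := by
      by_contra! hk
      have : 3 * 5 ≤ (a + b) * (a + b + 2) := Nat.mul_le_mul (by omega) (by omega)
      omega
    have ha2 : a ≤ 2 := by omega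
    have hb2 : b ≤ 2 := by omega
    interval_cases a <;> interval_cases b <;> try omega
    · obtain ⟨x, rfl⟩ := card_eq_one.mp ha
      obtain rfl := card_eq_zero.mp hb
      rw [sum_singleton, sum_zero] at hw
      exact .inl ⟨by rw [show x = 6 by omega], rfl⟩
    · obtain ⟨x, rfl⟩ := card_eq_one.mp ha
      obtain ⟨y, rfl⟩ := card_eq_one.mp hb
      rw [sum_singleton, sum_singleton] at hw
      exact .inr ⟨by rw [show x = 0 by omega], by rw [show y = 0 by omega]⟩
  · rintro (⟨rfl, rfl⟩ | ⟨rfl, rfl⟩) <;> simp [Nat.even_iff]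

theorem new_companion_second_and_nine :
    (∀ n : ℕ,
      {p : n.Partition | distinctOddParts p.parts ∧ minOddGe p.parts 3 ∧
          minEvenGe p.parts (2 * (Multiset.card p.parts + 1))}.ncard =
        {p : n.Partition | (∀ a ∈ p.parts, 3 ≤ a) ∧ gapCond p.parts}.ncard) ∧
      {p : Nat.Partition 9 | distinctOddParts p.parts ∧ minOddGe p.parts 3 ∧
          minEvenGe p.parts (2 * (Multiset.card p.parts + 1))}.ncard = 2 :=
  ⟨fun n => (ncard_isFirstKind n).trans (ncard_isSecondKind n).symm,
    (ncard_isFirstKind 9).trans <| by rw [evenPairs_nine, Set.ncard_pair (by decide)]⟩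
end
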